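/- arXiv:2009.08439 — 10 statements merged into one kernel-verified Lean document; each statement's English description precedes it below -/
import Mathlib

section
/- If G is a bipartite graph with vertex classes V₀ and V₁, and there exists a matching I₀ covering every vertex of V₀ and a matching I₁ covering every vertex of V₁, then G admits a perfect matching. -/
/-!
A matching covering one side of a bipartite graph injects that side into the other along edges.
The Schröder–Bernstein construction, applied to these two injections, yields a bijection between
the sides that still moves every vertex along an edge, and such a bijection is a perfect matching.
-/

open Function

namespace SimpleGraph

variable {V : Type*} {G : SimpleGraph V} {s t : Set V}

theorem Subgraph.IsMatching.exists_injective_adj {M : G.Subgraph} (hM : M.IsMatching) :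
    ∃ f : M.verts → V, Injective f ∧ ∀ v : M.verts, M.Adj v (f v) := by
  choose f hadj _ using fun v : M.verts ↦ hM v.2
  exact ⟨f, fun u v huv ↦ Subtype.ext (hM.eq_of_adj_right (hadj u) (huv ▸ hadj v)), hadj⟩

theorem IsBipartiteWith.exists_injective_adj_of_isMatching (hG : G.IsBipartiteWith s t)
    {M : G.Subgraph} (hM : M.IsMatching) (hs : s ⊆ M.verts) :
    ∃ f : s → t, Injective f ∧ ∀ v : s, G.Adj v (f v) := by
  obtain ⟨f, hf, hadj⟩ := hM.exists_injective_adj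
  exact ⟨fun v ↦ ⟨f ⟨v, hs v.2⟩, hG.mem_of_mem_adj v.2 (M.adj_sub (hadj ⟨v, hs v.2⟩))⟩,
    fun u v huv ↦ Subtype.ext (by simpa using hf (congrArg Subtype.val huv)),
    fun v ↦ M.adj_sub (hadj ⟨v, hs v.2⟩)⟩

theorem IsBipartiteWith.exists_isMatching_verts_eq_union (hG : G.IsBipartiteWith s t)
    {M₀ : G.Subgraph} (hM₀ : M₀.IsMatching) (hs : s ⊆ M₀.verts)
    {M₁ : G.Subgraph} (hM₁ : M₁.IsMatching) (ht : t ⊆ M₁.verts) :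
    ∃ M : G.Subgraph, M.verts = s ∪ t ∧ M.IsMatching := by
  obtain ⟨f, hf, hfadj⟩ := hG.exists_injective_adj_of_isMatching hM₀ hs
  obtain ⟨g, hg, hgadj⟩ := hG.symm.exists_injective_adj_of_isMatching hM₁ ht
  obtain ⟨e, he, headj⟩ := Embedding.schroeder_bernstein_of_rel hf hg (fun a b ↦ G.Adj a b)
    hfadj (fun b ↦ (hgadj b).symm)
  exact Subgraph.IsMatching.exists_of_disjoint_sets_of_equiv hG.disjoint (.ofBijective e he) headj

end SimpleGraph

/-- **Cantor–Bernstein for bipartite graphs.** If `G` is bipartite with classes `V₀, V₁`,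
a matching `I₀` covers `V₀` and a matching `I₁` covers `V₁`, then `G` has a perfect matching. -/
theorem cantor_bernstein_matching {V : Type*} (G : SimpleGraph V) (V₀ V₁ : Set V)
    (hpart : V₀ ∪ V₁ = Set.univ) (hdisj : Disjoint V₀ V₁)
    (hbip : ∀ ⦃u v⦄, G.Adj u v → (u ∈ V₀ ∧ v ∈ V₁) ∨ (u ∈ V₁ ∧ v ∈ V₀))
    (I₀ : G.Subgraph) (hI₀ : I₀.IsMatching) (hI₀c : V₀ ⊆ I₀.verts)
    (I₁ : G.Subgraph) (hI₁ : I₁.IsMatching) (hI₁c : V₁ ⊆ I₁.verts) :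
    ∃ M : G.Subgraph, M.IsPerfectMatching := by
  obtain ⟨M, hverts, hM⟩ := SimpleGraph.IsBipartiteWith.exists_isMatching_verts_eq_union
    ⟨hdisj, hbip⟩ hI₀ hI₀c hI₁ hI₁c
  exact ⟨M, hM, SimpleGraph.Subgraph.isSpanning_iff.mpr (hverts.trans hpart)⟩
end

section
/- Let G = (V₀, V₁; E) be a bipartite graph and let I₀, I₁ ⊆ E be matchings in G. Then there exists a matching I such that for each i ∈ {0,1}, every vertex of Vᵢ covered by Iᵢ is also covered by I. -/
/-!
Let `Aᵢ = V(Iᵢ) ∩ Vᵢ` and write `Nᵢ X` for the set of `Iᵢ`-partners of `X`. By Knaster–Tarski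
there are `S ⊆ A₀` and `T ⊆ A₁` with `S = A₀ \ N₁ T` and `T = A₁ \ N₀ S` (the decomposition
behind the Schröder–Bernstein theorem). Keep the `I₀`-edges at `S` and the `I₁`-edges at `T`:
bipartiteness and the two equations make these edge sets vertex-disjoint, and every vertex of
`A₀` lies in `S` or is an `I₁`-partner of `T`, symmetrically for `A₁`.
-/

open Set

theorem Monotone.exists_eq_sdiff_and_eq_sdiff {α β : Type*} [Order.Coframe α]
    [GeneralizedCoheytingAlgebra β] {f : α → β} {g : β → α} (hf : Monotone f) (hg : Monotone g)
    (a : α) (b : β) : ∃ x y, x = a \ g y ∧ y = b \ f x :=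
  let φ : α →o α :=
    ⟨fun x ↦ a \ g (b \ f x), fun _ _ h ↦ sdiff_le_sdiff_left (hg (sdiff_le_sdiff_left (hf h)))⟩
  ⟨φ.lfp, b \ f φ.lfp, φ.map_lfp.symm, rfl⟩

namespace SimpleGraph

variable {V : Type*} {G : SimpleGraph V}

theorem IsBipartiteWith.biUnion_neighborSet_subset {s t u : Set V} (h : G.IsBipartiteWith s t)
    (M : G.Subgraph) (hu : u ⊆ s) : ⋃ v ∈ u, M.neighborSet v ⊆ t := by
  simp only [iUnion_subset_iff]
  exact fun v hv w hw ↦ h.mem_of_mem_adj (hu hv) (M.adj_sub hw)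

namespace Subgraph

variable {M : G.Subgraph}

theorem IsMatching.induce_of_exists_adj (hM : M.IsMatching) {s : Set V}
    (hs : ∀ v ∈ s, ∃ w ∈ s, M.Adj v w) : (M.induce s).IsMatching := by
  intro v hv
  obtain ⟨w, hw, hvw⟩ := hs v hv
  exact ⟨w, ⟨hv, hw, hvw⟩, fun _ h ↦ hM.eq_of_adj_left h.2.2 hvw⟩

theorem IsMatching.induce_union_biUnion_neighborSet (hM : M.IsMatching) {s : Set V}
    (hs : s ⊆ M.verts) : (M.induce (s ∪ ⋃ v ∈ s, M.neighborSet v)).IsMatching := by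
  refine hM.induce_of_exists_adj ?_
  rintro v (hv | hv)
  · obtain ⟨w, hvw, -⟩ := hM (hs hv)
    exact ⟨w, Or.inr (mem_biUnion hv hvw), hvw⟩
  · obtain ⟨u, hu, huv⟩ := mem_iUnion₂.1 hv
    exact ⟨u, Or.inl hu, huv.symm⟩

end Subgraph

end SimpleGraph

theorem ore_matching_general {V : Type*} (G : SimpleGraph V) (V₀ V₁ : Set V)
    (hdisj : Disjoint V₀ V₁)
    (hbip : ∀ ⦃u v⦄, G.Adj u v → (u ∈ V₀ ∧ v ∈ V₁) ∨ (u ∈ V₁ ∧ v ∈ V₀))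
    (I₀ I₁ : G.Subgraph) (hI₀ : I₀.IsMatching) (hI₁ : I₁.IsMatching) :
    ∃ I : G.Subgraph, I.IsMatching ∧
      I₀.verts ∩ V₀ ⊆ I.verts ∧ I₁.verts ∩ V₁ ⊆ I.verts := by
  have hG : G.IsBipartiteWith V₀ V₁ := ⟨hdisj, hbip⟩
  set N₀ : Set V → Set V := fun s ↦ ⋃ v ∈ s, I₀.neighborSet v
  set N₁ : Set V → Set V := fun s ↦ ⋃ v ∈ s, I₁.neighborSet v
  obtain ⟨S, T, hS, hT⟩ := Monotone.exists_eq_sdiff_and_eq_sdiff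
    (f := N₀) (g := N₁) (fun _ _ h ↦ biUnion_subset_biUnion_left h)
    (fun _ _ h ↦ biUnion_subset_biUnion_left h) (I₀.verts ∩ V₀) (I₁.verts ∩ V₁)
  have hS₀ : S ⊆ I₀.verts ∩ V₀ := hS ▸ sdiff_subset
  have hT₁ : T ⊆ I₁.verts ∩ V₁ := hT ▸ sdiff_subset
  have hN₀S : N₀ S ⊆ V₁ := hG.biUnion_neighborSet_subset I₀ fun _ h ↦ (hS₀ h).2
  have hN₁T : N₁ T ⊆ V₀ := hG.symm.biUnion_neighborSet_subset I₁ fun _ h ↦ (hT₁ h).2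
  have hdisjoint : Disjoint (S ∪ N₀ S) (T ∪ N₁ T) := by
    refine disjoint_union_left.2 ⟨disjoint_union_right.2 ⟨?_, ?_⟩, disjoint_union_right.2 ⟨?_, ?_⟩⟩
    · exact hdisj.mono (fun _ h ↦ (hS₀ h).2) (fun _ h ↦ (hT₁ h).2)
    · exact hS ▸ disjoint_sdiff_left
    · exact hT ▸ disjoint_sdiff_right
    · exact hdisj.symm.mono hN₀S hN₁T
  refine ⟨I₀.induce (S ∪ N₀ S) ⊔ I₁.induce (T ∪ N₁ T), ?_, fun v hv ↦ ?_, fun v hv ↦ ?_⟩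
  · have h₀ := hI₀.induce_union_biUnion_neighborSet fun _ h ↦ (hS₀ h).1
    have h₁ := hI₁.induce_union_biUnion_neighborSet fun _ h ↦ (hT₁ h).1
    refine h₀.sup h₁ ?_
    rwa [h₀.support_eq_verts, h₁.support_eq_verts]
  · by_cases hvT : v ∈ N₁ T
    · exact Or.inr (Or.inr hvT)
    · exact Or.inl (Or.inl (hS ▸ ⟨hv, hvT⟩))
  · by_cases hvS : v ∈ N₀ S
    · exact Or.inl (Or.inr hvS)
    · exact Or.inr (Or.inl (hT ▸ ⟨hv, hvS⟩))

/-- **Ore's theorem.** Given matchings `I₀, I₁` in a bipartite graph `G = (V₀, V₁; E)`,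
there is a matching `I` with `V(I) ∩ Vᵢ ⊇ V(Iᵢ) ∩ Vᵢ` for `i ∈ {0,1}`. -/
theorem ore_matching {V : Type*} (G : SimpleGraph V) (V₀ V₁ : Set V)
    (hpart : V₀ ∪ V₁ = Set.univ) (hdisj : Disjoint V₀ V₁)
    (hbip : ∀ ⦃u v⦄, G.Adj u v → (u ∈ V₀ ∧ v ∈ V₁) ∨ (u ∈ V₁ ∧ v ∈ V₀))
    (I₀ I₁ : G.Subgraph) (hI₀ : I₀.IsMatching) (hI₁ : I₁.IsMatching) :
    ∃ I : G.Subgraph, I.IsMatching ∧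
      I₀.verts ∩ V₀ ⊆ I.verts ∧ I₁.verts ∩ V₁ ⊆ I.verts :=
  ore_matching_general G V₀ V₁ hdisj hbip I₀ I₁ hI₀ hI₁
end

section
/- Let G = (V, E) be a graph, V₀, V₁ ⊆ V, and for i ∈ {0,1} let 𝒫ᵢ be a system of pairwise vertex-disjoint V₀V₁-paths in G. Then there exists a system 𝒫 of pairwise vertex-disjoint V₀V₁-paths with V(𝒫) ∩ Vᵢ ⊇ V(𝒫ᵢ) ∩ Vᵢ for i ∈ {0,1}. -/
/-- A `V₀V₁`-path in `G`: a finite path meeting `V₀` and `V₁` which is subgraph-minimal with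
this property, i.e. it meets `V₀` exactly in its first vertex and `V₁` exactly in its last. -/
structure V01Path {V : Type*} (G : SimpleGraph V) (V₀ V₁ : Set V) where
  first : V
  last : V
  walk : G.Walk first last
  isPath : walk.IsPath
  first_mem : first ∈ V₀
  last_mem : last ∈ V₁
  meets_V₀_once : ∀ x ∈ walk.support, x ∈ V₀ → x = first
  meets_V₁_once : ∀ x ∈ walk.support, x ∈ V₁ → x = last

/-- The vertex set of a system of paths. -/
def pathsVerts {V : Type*} {G : SimpleGraph V} {V₀ V₁ : Set V}
    (Ps : Set (V01Path G V₀ V₁)) : Set V :=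
  ⋃ p ∈ Ps, {x | x ∈ p.walk.support}

/-!
Each vertex `x` shared by a path `p ∈ Ps₀` and a path `q ∈ Ps₁` is a contract between the red
agent `p` and the blue agent `q`; red paths prefer crossings near their start, blue paths crossings
near their end. As in Fleiner's proof of the Gale–Shapley theorem, a Knaster–Tarski fixed point
yields a stable matching `μ` of crossings. Following each matched `p` up to its crossing and then
its partner `q` to the end gives a `V₀V₁`-path; by stability these paths and the unmatched paths of
both systems are pairwise disjoint, and they still contain the first vertex of every path of `Ps₀`
and the last vertex of every path of `Ps₁`.
-/

open Function Set

namespace SimpleGraph.Walk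

variable {V : Type*} {G : SimpleGraph V} {u v w x y : V}

theorem isPath_append_iff {p : G.Walk u v} {q : G.Walk v w} :
    (p.append q).IsPath ↔ p.IsPath ∧ q.IsPath ∧ ∀ y ∈ p.support, y ∈ q.support → y = v := by
  have hv := p.end_mem_support
  rw [isPath_def, isPath_def, isPath_def, support_append, ← q.cons_tail_support, List.nodup_cons,
    List.nodup_append]
  grind

variable [DecidableEq V]

theorem IsPath.eq_of_mem_support_takeUntil_of_mem_support_dropUntil {p : G.Walk u v}
    (hp : p.IsPath) (hx : x ∈ p.support) (hy : y ∈ (p.takeUntil x hx).support)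
    (hy' : y ∈ (p.dropUntil x hx).support) : y = x :=
  (isPath_append_iff.mp ((p.take_spec hx).symm ▸ hp)).2.2 y hy hy'

theorem mem_support_takeUntil_iff (p : G.Walk u v) (hx : x ∈ p.support) :
    y ∈ (p.takeUntil x hx).support ↔ p.support.idxOf y ≤ p.support.idxOf x := by
  rw [(p.support_takeUntil_prefix_support hx).mem_iff_idxOf_lt_length, length_support,
    length_takeUntil, Nat.lt_succ_iff]

theorem IsPath.idxOf_le_of_mem_support_dropUntil {p : G.Walk u v} (hp : p.IsPath)
    (hx : x ∈ p.support) (hy : y ∈ (p.dropUntil x hx).support) :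
    p.support.idxOf x ≤ p.support.idxOf y := by
  by_contra! hlt
  obtain rfl := hp.eq_of_mem_support_takeUntil_of_mem_support_dropUntil hx
    ((p.mem_support_takeUntil_iff hx).mpr hlt.le) hy
  exact lt_irrefl _ hlt

end SimpleGraph.Walk

section StableMatching

variable {ι α β κ : Type*} [LinearOrder κ]

def topChoices (agent : ι → α) (rank : ι → κ) (A : Set ι) : Set ι :=
  {c ∈ A | ∀ d ∈ A, agent d = agent c → rank c ≤ rank d}

theorem monotone_diff_topChoices (agent : ι → α) (rank : ι → κ) :
    Monotone fun A => A \ topChoices agent rank A := by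
  rintro A B hAB c ⟨hcA, hc⟩
  exact ⟨hAB hcA, fun hcB => hc ⟨hcA, fun d hd => hcB.2 d (hAB hd)⟩⟩

theorem exists_mem_topChoices_le [WellFoundedLT κ] (agent : ι → α) (rank : ι → κ) {A : Set ι}
    {c : ι} (hc : c ∈ A) : ∃ m ∈ topChoices agent rank A, agent m = agent c ∧ rank m ≤ rank c := by
  obtain ⟨m, ⟨hmA, hmc⟩, hmin⟩ := (InvImage.wf rank wellFounded_lt).has_min
    {d | d ∈ A ∧ agent d = agent c} ⟨c, hc, rfl⟩
  exact ⟨m, ⟨hmA, fun d hd hdm => not_lt.mp (hmin d ⟨hd, hdm.trans hmc⟩)⟩, hmc,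
    not_lt.mp (hmin c ⟨hc, rfl⟩)⟩

theorem injOn_topChoices {agent : ι → α} {rank : ι → κ}
    (h : Injective fun c => (agent c, rank c)) (A : Set ι) :
    InjOn agent (topChoices agent rank A) := fun c hc d hd hcd =>
  h (Prod.ext hcd (le_antisymm (hc.2 d hd.1 hcd.symm) (hd.2 c hc.1 hcd)))

/-- Each contract `c` binds the agents `red c` and `blue c`; agents prefer lower ranks. -/
structure IsStableMatching (red : ι → α) (blue : ι → β) (ρ σ : ι → κ) (μ : Set ι) : Prop where
  injOn_red : InjOn red μ
  injOn_blue : InjOn blue μ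
  stable : ∀ c, (∃ m ∈ μ, red m = red c ∧ ρ m ≤ ρ c) ∨ (∃ m ∈ μ, blue m = blue c ∧ σ m ≤ σ c)

variable {red : ι → α} {blue : ι → β} {ρ σ : ι → κ}

/-- Fleiner's fixed-point proof of the Gale–Shapley theorem: for a fixed point `A` of
`A ↦ (B \ topChoices blue σ B)ᶜ`, where `B = (A \ topChoices red ρ A)ᶜ`, the contracts chosen by
the red agents from `A` are exactly those chosen by the blue agents from `B`. -/
theorem exists_isStableMatching [WellFoundedLT κ]
    (hρ : Injective fun c => (red c, ρ c)) (hσ : Injective fun c => (blue c, σ c)) :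
    ∃ μ, IsStableMatching red blue ρ σ μ := by
  let rejectedRed : Set ι →o Set ι := ⟨_, monotone_diff_topChoices red ρ⟩
  let rejectedBlue : Set ι →o Set ι := ⟨_, monotone_diff_topChoices blue σ⟩
  let F : Set ι →o Set ι := ⟨fun A => (rejectedBlue (rejectedRed A)ᶜ)ᶜ,
    fun _ _ h => compl_le_compl (rejectedBlue.monotone (compl_le_compl (rejectedRed.monotone h)))⟩
  set A := OrderHom.lfp F
  set B := (A \ topChoices red ρ A)ᶜ
  have hA : A = (B \ topChoices blue σ B)ᶜ := F.map_lfp.symm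
  have hred : A ∩ B = topChoices red ρ A :=
    Set.ext fun c => ⟨fun ⟨hcA, hcB⟩ => by_contra fun h => hcB ⟨hcA, h⟩,
      fun h => ⟨h.1, fun h' => h'.2 h⟩⟩
  have hblue : A ∩ B = topChoices blue σ B := by
    rw [hA]
    exact Set.ext fun c => ⟨fun ⟨hcA, hcB⟩ => by_contra fun h => hcA ⟨hcB, h⟩,
      fun h => ⟨fun h' => h'.2 h, h.1⟩⟩
  refine ⟨A ∩ B, hred ▸ injOn_topChoices hρ A, hblue ▸ injOn_topChoices hσ B, fun c => ?_⟩
  by_cases hcA : c ∈ A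
  · exact .inl (hred ▸ exists_mem_topChoices_le red ρ hcA)
  · have hcB : c ∈ B := by
      rw [hA] at hcA
      exact (not_not.mp hcA).1
    exact .inr (hblue ▸ exists_mem_topChoices_le blue σ hcB)

theorem IsStableMatching.mem_of_forall_le {μ : Set ι} (hμ : IsStableMatching red blue ρ σ μ)
    (hρ : Injective fun c => (red c, ρ c)) (hσ : Injective fun c => (blue c, σ c)) {c : ι}
    (hred : ∀ m ∈ μ, red m = red c → ρ c ≤ ρ m) (hblue : ∀ m ∈ μ, blue m = blue c → σ c ≤ σ m) :
    c ∈ μ := by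
  rcases hμ.stable c with ⟨m, hm, hmc, hle⟩ | ⟨m, hm, hmc, hle⟩
  · rwa [← hρ (Prod.ext hmc (le_antisymm hle (hred m hm hmc)))]
  · rwa [← hσ (Prod.ext hmc (le_antisymm hle (hblue m hm hmc)))]

end StableMatching

open SimpleGraph.Walk

namespace V01Path

variable {V : Type*} {G : SimpleGraph V} {V₀ V₁ : Set V}

def verts (p : V01Path G V₀ V₁) : Set V := {x | x ∈ p.walk.support}

theorem mem_pathsVerts {Ps : Set (V01Path G V₀ V₁)} {x : V} :
    x ∈ pathsVerts Ps ↔ ∃ p ∈ Ps, x ∈ p.walk.support := by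
  simp [pathsVerts]

variable [DecidableEq V]

def splice (p q : V01Path G V₀ V₁) (x : V) (hxp : x ∈ p.walk.support) (hxq : x ∈ q.walk.support)
    (hpq : ∀ y ∈ (p.walk.takeUntil x hxp).support, y ∈ (q.walk.dropUntil x hxq).support → y = x) :
    V01Path G V₀ V₁ where
  first := p.first
  last := q.last
  walk := (p.walk.takeUntil x hxp).append (q.walk.dropUntil x hxq)
  isPath := isPath_append_iff.mpr ⟨p.isPath.takeUntil hxp, q.isPath.dropUntil hxq, hpq⟩
  first_mem := p.first_mem
  last_mem := q.last_mem
  meets_V₀_once y hy hy₀ := by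
    rcases mem_support_append_iff _ _ |>.mp hy with hy | hy
    · exact p.meets_V₀_once y (support_takeUntil_subset_support _ _ hy) hy₀
    · obtain rfl := q.meets_V₀_once y (support_dropUntil_subset_support _ _ hy) hy₀
      obtain rfl := q.isPath.eq_of_mem_support_takeUntil_of_mem_support_dropUntil hxq
        (start_mem_support _) hy
      exact p.meets_V₀_once _ hxp hy₀
  meets_V₁_once y hy hy₁ := by
    rcases mem_support_append_iff _ _ |>.mp hy with hy | hy
    · obtain rfl := p.meets_V₁_once y (support_takeUntil_subset_support _ _ hy) hy₁
      obtain rfl := p.isPath.eq_of_mem_support_takeUntil_of_mem_support_dropUntil hxp hy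
        (end_mem_support _)
      exact q.meets_V₁_once _ hxq hy₁
    · exact q.meets_V₁_once y (support_dropUntil_subset_support _ _ hy) hy₁

variable (Ps₀ Ps₁ : Set (V01Path G V₀ V₁))

structure Crossing where
  red : V01Path G V₀ V₁
  blue : V01Path G V₀ V₁
  vertex : V
  red_mem : red ∈ Ps₀
  blue_mem : blue ∈ Ps₁
  mem_red : vertex ∈ red.walk.support
  mem_blue : vertex ∈ blue.walk.support

variable {Ps₀ Ps₁}

namespace Crossing

def redRank (c : Crossing Ps₀ Ps₁) : ℕ := c.red.walk.support.idxOf c.vertex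

def blueRank (c : Crossing Ps₀ Ps₁) : ℕ := c.blue.walk.length - c.blue.walk.support.idxOf c.vertex

theorem injective_red_redRank (h₁ : Ps₁.PairwiseDisjoint verts) :
    Function.Injective fun c : Crossing Ps₀ Ps₁ => (c.red, c.redRank) := by
  rintro ⟨p, q, x, hp, hq, hxp, hxq⟩ ⟨p', q', x', hp', hq', hxp', hxq'⟩ h
  simp only [Prod.mk.injEq, redRank] at h
  obtain ⟨rfl, hidx⟩ := h
  obtain rfl : x = x' := (List.idxOf_inj hxp).mp hidx
  obtain rfl : q = q' := h₁.elim_set hq hq' x hxq hxq'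
  rfl

theorem injective_blue_blueRank (h₀ : Ps₀.PairwiseDisjoint verts) :
    Function.Injective fun c : Crossing Ps₀ Ps₁ => (c.blue, c.blueRank) := by
  rintro ⟨p, q, x, hp, hq, hxp, hxq⟩ ⟨p', q', x', hp', hq', hxp', hxq'⟩ h
  simp only [Prod.mk.injEq, blueRank] at h
  obtain ⟨rfl, hrank⟩ := h
  have hx := List.idxOf_lt_length_of_mem hxq
  have hx' := List.idxOf_lt_length_of_mem hxq'
  rw [length_support] at hx hx'
  obtain rfl : x = x' := (List.idxOf_inj hxq).mp (by omega)
  obtain rfl : p = p' := h₀.elim_set hp hp' x hxp hxp'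
  rfl

abbrev IsStable (μ : Set (Crossing Ps₀ Ps₁)) : Prop :=
  IsStableMatching red blue redRank blueRank μ

variable (μ : Set (Crossing Ps₀ Ps₁))

def keptPrefix (p : V01Path G V₀ V₁) : Set V :=
  {y | y ∈ p.walk.support ∧
    ∀ m ∈ μ, m.red = p → p.walk.support.idxOf y ≤ p.walk.support.idxOf m.vertex}

def keptSuffix (q : V01Path G V₀ V₁) : Set V :=
  {y | y ∈ q.walk.support ∧
    ∀ m ∈ μ, m.blue = q → q.walk.support.idxOf m.vertex ≤ q.walk.support.idxOf y}

def splices : Set (V01Path G V₀ V₁) :=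
  {r | ∃ m ∈ μ, ∃ h, r = m.red.splice m.blue m.vertex m.mem_red m.mem_blue h}

def rerouted : Set (V01Path G V₀ V₁) :=
  splices μ ∪ (Ps₀ \ red '' μ) ∪ (Ps₁ \ blue '' μ)

variable {μ}

theorem mem_keptPrefix_of_notMem_image {p : V01Path G V₀ V₁} (hp : p ∉ red '' μ) {y : V}
    (hy : y ∈ p.walk.support) : y ∈ keptPrefix μ p :=
  ⟨hy, fun m hm hmp => absurd ⟨m, hm, hmp⟩ hp⟩

theorem mem_keptSuffix_of_notMem_image {q : V01Path G V₀ V₁} (hq : q ∉ blue '' μ) {y : V}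
    (hy : y ∈ q.walk.support) : y ∈ keptSuffix μ q :=
  ⟨hy, fun m hm hmq => absurd ⟨m, hm, hmq⟩ hq⟩

namespace IsStable

theorem mk_mem_of_mem_kept (hμ : IsStable μ) (h₀ : Ps₀.PairwiseDisjoint verts)
    (h₁ : Ps₁.PairwiseDisjoint verts) {p q : V01Path G V₀ V₁} (hp : p ∈ Ps₀) (hq : q ∈ Ps₁)
    {y : V} (hyp : y ∈ keptPrefix μ p) (hyq : y ∈ keptSuffix μ q) :
    ⟨p, q, y, hp, hq, hyp.1, hyq.1⟩ ∈ μ := by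
  refine hμ.mem_of_forall_le (injective_red_redRank h₁) (injective_blue_blueRank h₀) ?_ ?_
  · rintro m hm rfl
    exact hyp.2 m hm rfl
  · rintro m hm rfl
    exact Nat.sub_le_sub_left (hyq.2 m hm rfl) _

theorem mem_keptPrefix (hμ : IsStable μ) {m : Crossing Ps₀ Ps₁} (hm : m ∈ μ) {y : V}
    (hy : y ∈ (m.red.walk.takeUntil m.vertex m.mem_red).support) : y ∈ keptPrefix μ m.red := by
  refine ⟨support_takeUntil_subset_support _ _ hy, fun m' hm' hmm' => ?_⟩
  obtain rfl := hμ.injOn_red hm' hm hmm'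
  exact (mem_support_takeUntil_iff _ _).mp hy

theorem mem_keptSuffix (hμ : IsStable μ) {m : Crossing Ps₀ Ps₁} (hm : m ∈ μ) {y : V}
    (hy : y ∈ (m.blue.walk.dropUntil m.vertex m.mem_blue).support) : y ∈ keptSuffix μ m.blue := by
  refine ⟨support_dropUntil_subset_support _ _ hy, fun m' hm' hmm' => ?_⟩
  obtain rfl := hμ.injOn_blue hm' hm hmm'
  exact m'.blue.isPath.idxOf_le_of_mem_support_dropUntil _ hy

theorem eq_vertex_of_mem_takeUntil_dropUntil (hμ : IsStable μ)
    (h₀ : Ps₀.PairwiseDisjoint verts) (h₁ : Ps₁.PairwiseDisjoint verts) {m : Crossing Ps₀ Ps₁}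
    (hm : m ∈ μ) {y : V}
    (hyp : y ∈ (m.red.walk.takeUntil m.vertex m.mem_red).support)
    (hyq : y ∈ (m.blue.walk.dropUntil m.vertex m.mem_blue).support) : y = m.vertex :=
  congrArg vertex <| hμ.injOn_red
    (hμ.mk_mem_of_mem_kept h₀ h₁ m.red_mem m.blue_mem (hμ.mem_keptPrefix hm hyp)
      (hμ.mem_keptSuffix hm hyq))
    hm rfl

theorem mem_keptPrefix_or_mem_keptSuffix (hμ : IsStable μ) {m : Crossing Ps₀ Ps₁} (hm : m ∈ μ)
    {h} {y : V} (hy : y ∈ (m.red.splice m.blue m.vertex m.mem_red m.mem_blue h).walk.support) :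
    y ∈ keptPrefix μ m.red ∨ y ∈ keptSuffix μ m.blue :=
  (mem_support_append_iff _ _).mp hy |>.imp (hμ.mem_keptPrefix hm) (hμ.mem_keptSuffix hm)

theorem pairwiseDisjoint_splices (hμ : IsStable μ) (h₀ : Ps₀.PairwiseDisjoint verts)
    (h₁ : Ps₁.PairwiseDisjoint verts) : (splices μ).PairwiseDisjoint verts := by
  rintro _ ⟨m, hm, _, rfl⟩ _ ⟨m', hm', _, rfl⟩ hne
  refine Set.disjoint_left.mpr fun y hy hy' => hne ?_
  suffices m = m' by subst this; rfl
  rcases hμ.mem_keptPrefix_or_mem_keptSuffix hm hy with hy | hy <;>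
    rcases hμ.mem_keptPrefix_or_mem_keptSuffix hm' hy' with hy' | hy'
  · exact hμ.injOn_red hm hm' (h₀.elim_set m.red_mem m'.red_mem y hy.1 hy'.1)
  · have hc := hμ.mk_mem_of_mem_kept h₀ h₁ m.red_mem m'.blue_mem hy hy'
    exact (hμ.injOn_red hc hm rfl).symm.trans (hμ.injOn_blue hc hm' rfl)
  · have hc := hμ.mk_mem_of_mem_kept h₀ h₁ m'.red_mem m.blue_mem hy' hy
    exact (hμ.injOn_blue hc hm rfl).symm.trans (hμ.injOn_red hc hm' rfl)
  · exact hμ.injOn_blue hm hm' (h₁.elim_set m.blue_mem m'.blue_mem y hy.1 hy'.1)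

theorem disjoint_splice_of_notMem_image_red (hμ : IsStable μ) (h₀ : Ps₀.PairwiseDisjoint verts)
    (h₁ : Ps₁.PairwiseDisjoint verts) {m : Crossing Ps₀ Ps₁} (hm : m ∈ μ) {h}
    {p : V01Path G V₀ V₁} (hp : p ∈ Ps₀ \ red '' μ) :
    Disjoint (m.red.splice m.blue m.vertex m.mem_red m.mem_blue h).verts p.verts := by
  refine Set.disjoint_left.mpr fun y hy hyp => hp.2 ?_
  rcases hμ.mem_keptPrefix_or_mem_keptSuffix hm hy with hy | hy
  · exact ⟨m, hm, h₀.elim_set m.red_mem hp.1 y hy.1 hyp⟩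
  · exact ⟨_, hμ.mk_mem_of_mem_kept h₀ h₁ hp.1 m.blue_mem
      (mem_keptPrefix_of_notMem_image hp.2 hyp) hy, rfl⟩

theorem disjoint_splice_of_notMem_image_blue (hμ : IsStable μ) (h₀ : Ps₀.PairwiseDisjoint verts)
    (h₁ : Ps₁.PairwiseDisjoint verts) {m : Crossing Ps₀ Ps₁} (hm : m ∈ μ) {h}
    {q : V01Path G V₀ V₁} (hq : q ∈ Ps₁ \ blue '' μ) :
    Disjoint (m.red.splice m.blue m.vertex m.mem_red m.mem_blue h).verts q.verts := by
  refine Set.disjoint_left.mpr fun y hy hyq => hq.2 ?_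
  rcases hμ.mem_keptPrefix_or_mem_keptSuffix hm hy with hy | hy
  · exact ⟨_, hμ.mk_mem_of_mem_kept h₀ h₁ m.red_mem hq.1 hy
      (mem_keptSuffix_of_notMem_image hq.2 hyq), rfl⟩
  · exact ⟨m, hm, h₁.elim_set m.blue_mem hq.1 y hy.1 hyq⟩

theorem disjoint_of_notMem_image (hμ : IsStable μ) (h₀ : Ps₀.PairwiseDisjoint verts)
    (h₁ : Ps₁.PairwiseDisjoint verts) {p q : V01Path G V₀ V₁} (hp : p ∈ Ps₀ \ red '' μ)
    (hq : q ∈ Ps₁ \ blue '' μ) : Disjoint p.verts q.verts :=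
  Set.disjoint_left.mpr fun _ hyp hyq => hp.2 ⟨_, hμ.mk_mem_of_mem_kept h₀ h₁ hp.1 hq.1
    (mem_keptPrefix_of_notMem_image hp.2 hyp) (mem_keptSuffix_of_notMem_image hq.2 hyq), rfl⟩

theorem pairwiseDisjoint_rerouted (hμ : IsStable μ) (h₀ : Ps₀.PairwiseDisjoint verts)
    (h₁ : Ps₁.PairwiseDisjoint verts) : (rerouted μ).PairwiseDisjoint verts := by
  refine .union (.union (hμ.pairwiseDisjoint_splices h₀ h₁) (h₀.subset sdiff_subset) ?_)
    (h₁.subset sdiff_subset) ?_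
  · rintro _ ⟨m, hm, h, rfl⟩ p hp -
    exact hμ.disjoint_splice_of_notMem_image_red h₀ h₁ hm hp
  · rintro _ (⟨m, hm, h, rfl⟩ | hp) q hq -
    · exact hμ.disjoint_splice_of_notMem_image_blue h₀ h₁ hm hq
    · exact hμ.disjoint_of_notMem_image h₀ h₁ hp hq

theorem first_mem_pathsVerts_rerouted (hμ : IsStable μ) (h₀ : Ps₀.PairwiseDisjoint verts)
    (h₁ : Ps₁.PairwiseDisjoint verts) {p : V01Path G V₀ V₁} (hp : p ∈ Ps₀) :
    p.first ∈ pathsVerts (rerouted μ) := by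
  by_cases hpμ : p ∈ red '' μ
  · obtain ⟨m, hm, rfl⟩ := hpμ
    refine mem_pathsVerts.mpr ⟨_, .inl (.inl ⟨m, hm, ?_, rfl⟩), start_mem_support _⟩
    exact fun _ => hμ.eq_vertex_of_mem_takeUntil_dropUntil h₀ h₁ hm
  · exact mem_pathsVerts.mpr ⟨p, .inl (.inr ⟨hp, hpμ⟩), start_mem_support _⟩

theorem last_mem_pathsVerts_rerouted (hμ : IsStable μ) (h₀ : Ps₀.PairwiseDisjoint verts)
    (h₁ : Ps₁.PairwiseDisjoint verts) {q : V01Path G V₀ V₁} (hq : q ∈ Ps₁) :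
    q.last ∈ pathsVerts (rerouted μ) := by
  by_cases hqμ : q ∈ blue '' μ
  · obtain ⟨m, hm, rfl⟩ := hqμ
    refine mem_pathsVerts.mpr ⟨_, .inl (.inl ⟨m, hm, ?_, rfl⟩), end_mem_support _⟩
    exact fun _ => hμ.eq_vertex_of_mem_takeUntil_dropUntil h₀ h₁ hm
  · exact mem_pathsVerts.mpr ⟨q, .inr ⟨hq, hqμ⟩, end_mem_support _⟩

end IsStable

end Crossing

end V01Path

open V01Path V01Path.Crossing

/-- **Diestel–Thomassen: a Cantor–Bernstein theorem for paths in graphs.** -/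
theorem cantor_bernstein_paths {V : Type*} (G : SimpleGraph V) (V₀ V₁ : Set V)
    (Ps₀ Ps₁ : Set (V01Path G V₀ V₁))
    (h₀ : Ps₀.Pairwise fun p q => Disjoint {x | x ∈ p.walk.support} {x | x ∈ q.walk.support})
    (h₁ : Ps₁.Pairwise fun p q => Disjoint {x | x ∈ p.walk.support} {x | x ∈ q.walk.support}) :
    ∃ Ps : Set (V01Path G V₀ V₁),
      (Ps.Pairwise fun p q => Disjoint {x | x ∈ p.walk.support} {x | x ∈ q.walk.support}) ∧
      pathsVerts Ps₀ ∩ V₀ ⊆ pathsVerts Ps ∩ V₀ ∧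
      pathsVerts Ps₁ ∩ V₁ ⊆ pathsVerts Ps ∩ V₁ := by
  classical
  obtain ⟨μ, hμ⟩ : ∃ μ : Set (Crossing Ps₀ Ps₁), IsStable μ :=
    exists_isStableMatching (injective_red_redRank h₁) (injective_blue_blueRank h₀)
  refine ⟨rerouted μ, hμ.pairwiseDisjoint_rerouted h₀ h₁, ?_, ?_⟩
  · rintro v ⟨hv, hv₀⟩
    obtain ⟨p, hp, hvp⟩ := mem_pathsVerts.mp hv
    obtain rfl := p.meets_V₀_once v hvp hv₀
    exact ⟨hμ.first_mem_pathsVerts_rerouted h₀ h₁ hp, hv₀⟩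
  · rintro v ⟨hv, hv₁⟩
    obtain ⟨q, hq, hvq⟩ := mem_pathsVerts.mp hv
    obtain rfl := q.meets_V₁_once v hvq hv₁
    exact ⟨hμ.last_mem_pathsVerts_rerouted h₀ h₁ hq, hv₁⟩
end

section
/- Let M₀ and M₁ be finite matroids on a common ground set E, and let I₀ and I₁ each be independent in both M₀ and M₁. Then there exists a set I, independent in both M₀ and M₁, such that Iᵢ ⊆ span_{Mᵢ}(I) for i ∈ {0,1}. -/
/-!
Induct on `|I₀ \ I₁|`. If `I₀ ⊆ cl₀(I₁)`, then `I₁` works. Otherwise pick `x ∈ I₀ \ cl₀(I₁)`,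
so `I₁ + x` is `M₀`-independent, and extend the `M₁`-independent set `(I₀ ∩ I₁) + x ⊆ I₀` to an
`M₁`-basis `B` of `I₁ + x`. Then `B` is independent in both matroids, spans `I₁` in `M₁`, and
`I₀ \ B` is strictly smaller than `I₀ \ I₁` since it misses `x`; a set found for `I₀` and `B`
also works for `I₀` and `I₁`.
-/

open Set

namespace Matroid

variable {α : Type*} {M₀ M₁ : Matroid α} {I₀ I₁ : Set α} {x : α}

theorem exists_indep_indep_subset_closure_diff_ssubset (h₀₁ : M₁.Indep I₀)
    (h₁₀ : M₀.Indep I₁) (h₁₁ : M₁.Indep I₁) (hxI₀ : x ∈ I₀) (hxE : x ∈ M₀.E)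
    (hxcl : x ∉ M₀.closure I₁) :
    ∃ B, M₀.Indep B ∧ M₁.Indep B ∧ I₁ ⊆ M₁.closure B ∧ I₀ \ B ⊂ I₀ \ I₁ := by
  have hxI₁ : x ∉ I₁ := fun h ↦ hxcl (M₀.subset_closure I₁ h₁₀.subset_ground h)
  have hins₀ : M₀.Indep (insert x I₁) := h₁₀.insert_indep_iff.2 (Or.inl ⟨hxE, hxcl⟩)
  have hcore₁ : M₁.Indep (insert x (I₀ ∩ I₁)) :=
    h₀₁.subset (insert_subset hxI₀ inter_subset_left)
  obtain ⟨B, hB, hcoreB⟩ := hcore₁.subset_isBasis_of_subset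
    (insert_subset_insert inter_subset_right)
    (insert_subset (h₀₁.subset_ground hxI₀) h₁₁.subset_ground)
  have hxB : x ∈ B := hcoreB (mem_insert x _)
  have hdiff : I₀ \ B ⊆ I₀ \ I₁ := fun z ⟨hzI₀, hzB⟩ ↦
    ⟨hzI₀, fun hzI₁ ↦ hzB (hcoreB (mem_insert_of_mem x ⟨hzI₀, hzI₁⟩))⟩
  refine ⟨B, hins₀.subset hB.subset, hB.indep, (subset_insert x I₁).trans hB.subset_closure,
    (ssubset_iff_of_subset hdiff).2 ⟨x, ⟨hxI₀, hxI₁⟩, fun h ↦ h.2 hxB⟩⟩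

theorem exists_indep_indep_subset_closure_of_finite (hfin : I₀.Finite) (h₀₀ : M₀.Indep I₀)
    (h₀₁ : M₁.Indep I₀) (h₁₀ : M₀.Indep I₁) (h₁₁ : M₁.Indep I₁) :
    ∃ I, M₀.Indep I ∧ M₁.Indep I ∧ I₀ ⊆ M₀.closure I ∧ I₁ ⊆ M₁.closure I := by
  induction hn : (I₀ \ I₁).ncard using Nat.strong_induction_on generalizing I₁ with
  | _ n ih =>
    by_cases hspan : I₀ ⊆ M₀.closure I₁
    · exact ⟨I₁, h₁₀, h₁₁, hspan, M₁.subset_closure I₁ h₁₁.subset_ground⟩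
    obtain ⟨x, hxI₀, hxcl⟩ := not_subset.1 hspan
    obtain ⟨B, hB₀, hB₁, hI₁B, hlt⟩ := exists_indep_indep_subset_closure_diff_ssubset
      h₀₁ h₁₀ h₁₁ hxI₀ (h₀₀.subset_ground hxI₀) hxcl
    obtain ⟨I, hI₀, hI₁, hI₀I, hBI⟩ :=
      ih _ (hn ▸ ncard_lt_ncard hlt hfin.sdiff) hB₀ hB₁ rfl
    exact ⟨I, hI₀, hI₁, hI₀I, hI₁B.trans (M₁.closure_subset_closure_of_subset_closure hBI)⟩

end Matroid

theorem kundu_lawler_general {α : Type*} (M₀ M₁ : Matroid α) [M₀.Finite]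
    (I₀ I₁ : Set α)
    (h₀₀ : M₀.Indep I₀) (h₀₁ : M₁.Indep I₀) (h₁₀ : M₀.Indep I₁) (h₁₁ : M₁.Indep I₁) :
    ∃ I, M₀.Indep I ∧ M₁.Indep I ∧ I₀ ⊆ M₀.closure I ∧ I₁ ⊆ M₁.closure I :=
  Matroid.exists_indep_indep_subset_closure_of_finite h₀₀.finite h₀₀ h₀₁ h₁₀ h₁₁

/-- **Kundu–Lawler theorem.** For finite matroids `M₀, M₁` on a common ground set and sets
`I₀, I₁` independent in both, there is a common independent set `I` with
`Iᵢ ⊆ span_{Mᵢ}(I)` for `i ∈ {0,1}`. -/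
theorem kundu_lawler {α : Type*} (M₀ M₁ : Matroid α) [M₀.Finite] [M₁.Finite]
    (hE : M₀.E = M₁.E) (I₀ I₁ : Set α)
    (h₀₀ : M₀.Indep I₀) (h₀₁ : M₁.Indep I₀) (h₁₀ : M₀.Indep I₁) (h₁₁ : M₁.Indep I₁) :
    ∃ I, M₀.Indep I ∧ M₁.Indep I ∧ I₀ ⊆ M₀.closure I ∧ I₁ ⊆ M₁.closure I :=
  kundu_lawler_general M₀ M₁ I₀ I₁ h₀₀ h₀₁ h₁₀ h₁₁
end

section
/- Let E be a set well-ordered by <, and define a relation ≺ on finite subsets of E by: X ≺ Y iff X ≠ Y and either X = ∅, or max X < max Y, or max X = max Y = z and X − z ≺ Y − z (recursively). Then ≺ is a well-order on the collection of finite subsets of E. -/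
/-!
Strong induction on `X` shows that the recursion forces `≺` to be the colexicographic order,
which is linear. Colex is well-founded because `s < t` in colex means that every element of
`s \ t` lies below some element of the nonempty set `t \ s`. That makes it a Dershowitz–Manna step
between the underlying multisets.
-/

open Finset Colex

namespace Finset.Colex

theorem isDershowitzMannaLT_val_of_toColex_lt {α : Type*} [PartialOrder α] {s t : Finset α}
    (h : toColex s < toColex t) : Multiset.IsDershowitzMannaLT s.val t.val := by
  classical
  refine ⟨(s ∩ t).val, (s \ t).val, (t \ s).val, ?_, ?_, ?_, ?_⟩
  · have : ¬ t ⊆ s := fun hts => h.not_ge (toColex_le_toColex_of_subset hts)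
    rwa [Ne, Multiset.empty_eq_zero, val_eq_zero, sdiff_eq_empty_iff_subset]
  · rw [inter_val, sdiff_val, add_comm, Multiset.sub_add_inter]
  · rw [inter_val, sdiff_val, Multiset.inter_comm, add_comm, Multiset.sub_add_inter]
  · intro a ha
    rw [mem_val, mem_sdiff] at ha
    obtain ⟨b, hbt, hbs, hab⟩ := toColex_le_toColex.1 h.le ha.1 ha.2
    exact ⟨b, mem_sdiff.2 ⟨hbt, hbs⟩, hab.lt_of_ne (by rintro rfl; exact ha.2 hbt)⟩

instance instWellFoundedLT {α : Type*} [PartialOrder α] [WellFoundedLT α] :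
    WellFoundedLT (Colex (Finset α)) :=
  ⟨Subrelation.wf isDershowitzMannaLT_val_of_toColex_lt
    (InvImage.wf (fun s : Colex (Finset α) => (ofColex s).val)
      Multiset.wellFounded_isDershowitzMannaLT)⟩

section LinearOrder

variable {α : Type*} [LinearOrder α] {s t : Finset α}

theorem toColex_lt_toColex_of_max_lt (h : s.max < t.max) : toColex s < toColex t := by
  obtain ⟨b, hb⟩ := WithBot.ne_bot_iff_exists.1 h.ne_bot
  have hbt : b ∈ t := mem_of_max hb.symm
  refine toColex_lt_toColex_iff_exists_forall_lt.2 ⟨b, hbt, fun hbs => ?_, fun a ha _ => ?_⟩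
  · exact (le_max hbs).not_gt (hb ▸ h)
  · exact WithBot.coe_lt_coe.1 ((le_max ha).trans_lt (hb ▸ h))

theorem toColex_lt_toColex_iff_max : toColex s < toColex t ↔ s ≠ t ∧ (s = ∅ ∨ s.max < t.max ∨
    ∃ a : α, s.max = a ∧ t.max = a ∧ toColex (s.erase a) < toColex (t.erase a)) := by
  have erase_lt_erase_iff {a : α} (hs : a ∈ s) (ht : a ∈ t) :
      toColex (s.erase a) < toColex (t.erase a) ↔ toColex s < toColex t := by
    simpa only [sdiff_singleton_eq_erase] using
      toColex_sdiff_lt_toColex_sdiff (singleton_subset_iff.2 hs) (singleton_subset_iff.2 ht)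
  constructor
  · intro h
    refine ⟨fun hst => h.ne (congrArg toColex hst), ?_⟩
    rcases lt_trichotomy s.max t.max with hlt | heq | hgt
    · exact Or.inr (Or.inl hlt)
    · cases hs : s.max with
      | bot => exact Or.inl (max_eq_bot.1 hs)
      | coe a =>
        have ht : t.max = a := heq ▸ hs
        exact Or.inr <| Or.inr
          ⟨a, rfl, ht, (erase_lt_erase_iff (mem_of_max hs) (mem_of_max ht)).2 h⟩
    · exact absurd (toColex_lt_toColex_of_max_lt hgt) h.not_gt
  · rintro ⟨hst, rfl | hlt | ⟨a, hs, ht, h⟩⟩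
    · exact bot_lt_iff_ne_bot.2 fun h => hst (congrArg ofColex h).symm
    · exact toColex_lt_toColex_of_max_lt hlt
    · exact (erase_lt_erase_iff (mem_of_max hs) (mem_of_max ht)).1 h

theorem rel_iff_toColex_lt_of_max_recursion (r : Finset α → Finset α → Prop)
    (hr : ∀ X Y, r X Y ↔ X ≠ Y ∧ (X = ∅ ∨ X.max < Y.max ∨
      ∃ z : α, X.max = (z : WithBot α) ∧ Y.max = (z : WithBot α) ∧ r (X.erase z) (Y.erase z)))
    (s t : Finset α) : r s t ↔ toColex s < toColex t := by
  induction s using Finset.strongInduction generalizing t with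
  | H s ih =>
  rw [hr, toColex_lt_toColex_iff_max]
  refine and_congr_right fun _ => or_congr_right <| or_congr_right <| exists_congr fun a =>
    and_congr_right fun hs => and_congr_right fun _ => ih _ (erase_ssubset (mem_of_max hs)) _

end LinearOrder

end Finset.Colex

/-- The relation `≺` on finite subsets of a well-ordered set `(E, <)` given by
`X ≺ Y` iff `X ≠ Y` and either `X = ∅`, or `max X < max Y`, or
`max X = max Y = z` and `X − z ≺ Y − z`, is a well-order on the finite subsets of `E`. -/
theorem finset_order_isWellOrder {E : Type*} [LinearOrder E] [WellFoundedLT E]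
    (r : Finset E → Finset E → Prop)
    (hr : ∀ X Y, r X Y ↔ X ≠ Y ∧ (X = ∅ ∨ X.max < Y.max ∨
      ∃ z : E, X.max = (z : WithBot E) ∧ Y.max = (z : WithBot E) ∧ r (X.erase z) (Y.erase z))) :
    IsWellOrder (Finset E) r := by
  obtain rfl : r = toColex ⁻¹'o (· < ·) :=
    funext₂ fun s t => propext (Colex.rel_iff_toColex_lt_of_max_recursion r hr s t)
  exact RelIso.IsWellOrder.preimage _ toColex
end

section
/- Let M₀ and M₁ be finite matroids on ground set E and let F₀, F₁ ⊆ E. Then there exists F ⊆ E such that for each i ∈ {0,1}: Fᵢ ⊆ span_{Mᵢ}(F) and E \ F_{1−i} ⊆ span_{Mᵢ*}(E \ F). -/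
/-!
For `F ⊆ E` one has `M✶.closure (E \ F) = (E \ F) ∪ (M ↾ F).coloops`, so the two dual
conditions say that the elements of `F \ F₁` are coloops of `M₀ ↾ F` and those of `F \ F₀`
coloops of `M₁ ↾ F`. Call `F` good (`SpansWithColoops`) if also `F₀ ⊆ cl₀(F)`; a basis of `F₀`
in `M₀` is good.
If a good `F` has `y ∈ F₁ \ cl₁(F)`, put `K = insert y (F ∩ F₁)` and replace `F \ F₁` by a
basis of it in `M₀ ／ K`. This keeps `cl₀`, makes the new elements outside `F₁` coloops for `M₀`,
and keeps the `M₁`-coloops outside `F₀`: by closure exchange, adding an element outside `cl₁(F)`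
destroys no coloop. So `F ∩ F₁` grows strictly, and a good `F` with `F ∩ F₁` maximal spans `F₁`
in `M₁`.
-/

open Set

namespace Matroid

variable {α : Type*} {M M₀ M₁ : Matroid α} {F F₀ F₁ I K S T : Set α} {y : α}

lemma dual_closure_compl_eq (hF : F ⊆ M.E) :
    M✶.closure (M.E \ F) = (M.E \ F) ∪ (M ↾ F).coloops := by
  have hsub : M.E \ F ⊆ M✶.closure (M.E \ F) := M✶.subset_closure _ sdiff_subset
  rw [← union_sdiff_cancel hsub, ← contract_loops_eq, ← dual_delete, dual_loops, delete_compl hF]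

lemma sdiff_subset_dual_closure_compl (hF : F ⊆ M.E) (hS : F \ S ⊆ (M ↾ F).coloops) :
    M.E \ S ⊆ M✶.closure (M.E \ F) := by
  rw [dual_closure_compl_eq hF]
  intro e he
  by_cases heF : e ∈ F
  · exact Or.inr (hS ⟨heF, he.2⟩)
  · exact Or.inl ⟨he.1, heF⟩

lemma Indep.subset_coloops_restrict (hI : M.Indep I) : I ⊆ (M ↾ I).coloops :=
  fun _ he ↦ (restrict_isColoop_iff hI.subset_ground).2 ⟨hI.notMem_closure_sdiff_of_mem he, he⟩

lemma inter_coloops_restrict_subset (hST : S ⊆ T) : S ∩ (M ↾ T).coloops ⊆ (M ↾ S).coloops := by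
  rintro e ⟨heS, he⟩
  have he' : (M ↾ T).IsColoop e := he
  rw [isColoop_iff_notMem_closure_compl] at he'
  change (M ↾ S).IsColoop e
  rw [← restrict_restrict_eq M hST, restrict_isColoop_iff hST]
  exact ⟨fun h ↦ he' (closure_subset_closure _ (sdiff_subset_sdiff_left hST) h), heS⟩

lemma insert_coloops_restrict_subset (hF : F ⊆ M.E) (hy : y ∈ M.E) (hyF : y ∉ M.closure F) :
    insert y (M ↾ F).coloops ⊆ (M ↾ insert y F).coloops := by
  have hyFE : insert y F ⊆ M.E := insert_subset hy hF
  rintro e (rfl | he)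
  · refine (restrict_isColoop_iff hyFE).2 ⟨fun h ↦ hyF ?_, mem_insert _ _⟩
    exact M.closure_subset_closure (by simp) h
  · obtain ⟨heF', heF⟩ := (restrict_isColoop_iff hF).1 he
    have hye : y ≠ e := by
      rintro rfl
      exact hyF (M.subset_closure F hF heF)
    refine (restrict_isColoop_iff hyFE).2 ⟨fun h ↦ hyF ?_, mem_insert_of_mem _ heF⟩
    rw [← insert_sdiff_singleton_comm hye] at h
    have hex := M.closure_exchange ⟨h, heF'⟩
    rw [insert_sdiff_singleton, insert_eq_of_mem heF] at hex
    exact hex.1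

lemma exists_subset_closure_union_eq (hK : K ⊆ M.E) (W : Set α) :
    ∃ B ⊆ W, M.closure (K ∪ B) = M.closure (K ∪ W) ∧ B ⊆ (M ↾ (K ∪ B)).coloops := by
  obtain ⟨B, hB⟩ := (M ／ K).exists_isBasis' W
  have hBK : Disjoint B K := (subset_sdiff.1 hB.indep.subset_ground).2
  have hBE : B ⊆ M.E := hB.indep.of_contract.subset_ground
  have hcl := hB.closure_eq_closure
  rw [contract_closure_eq, contract_closure_eq] at hcl
  refine ⟨B, hB.subset, ?_, fun b hb ↦ ?_⟩
  · rw [union_comm K B, union_comm K W,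
      ← sdiff_union_of_subset (M.subset_closure_of_subset' subset_union_right hK), hcl,
      sdiff_union_of_subset (M.subset_closure_of_subset' subset_union_right hK)]
  · have hbK : b ∉ K := hBK.notMem_of_mem_left hb
    have hb' := hB.indep.notMem_closure_sdiff_of_mem hb
    rw [contract_closure_eq] at hb'
    refine (restrict_isColoop_iff (union_subset hK hBE)).2 ⟨fun h ↦ hb' ⟨?_, hbK⟩, Or.inr hb⟩
    rwa [union_sdiff_distrib, sdiff_singleton_eq_self hbK, union_comm] at h

structure SpansWithColoops (M₀ M₁ : Matroid α) (F₀ F₁ F : Set α) : Prop where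
  subset_ground : F ⊆ M₀.E
  subset_closure : F₀ ⊆ M₀.closure F
  sdiff_subset_coloops₀ : F \ F₁ ⊆ (M₀ ↾ F).coloops
  sdiff_subset_coloops₁ : F \ F₀ ⊆ (M₁ ↾ F).coloops

lemma exists_spansWithColoops (hF₀ : F₀ ⊆ M₀.E) :
    ∃ F, SpansWithColoops M₀ M₁ F₀ F₁ F := by
  obtain ⟨I, hI⟩ := M₀.exists_isBasis F₀
  exact ⟨I, hI.indep.subset_ground, hI.subset_closure,
    sdiff_subset.trans hI.indep.subset_coloops_restrict, by simp [sdiff_eq_empty.2 hI.subset]⟩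

lemma SpansWithColoops.exists_inter_ssubset (h : SpansWithColoops M₀ M₁ F₀ F₁ F)
    (hE : M₁.E = M₀.E) (hy : y ∈ F₁ ∩ M₁.E) (hyF : y ∉ M₁.closure F) :
    ∃ F', SpansWithColoops M₀ M₁ F₀ F₁ F' ∧ F ∩ F₁ ⊂ F' ∩ F₁ := by
  have hFE₁ : F ⊆ M₁.E := hE ▸ h.subset_ground
  have hyE₀ : y ∈ M₀.E := hE ▸ hy.2
  have hyF' : y ∉ F := fun hyF' ↦ hyF (M₁.subset_closure F hFE₁ hyF')
  set K := insert y (F ∩ F₁)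
  have hKF₁ : K ⊆ F₁ := insert_subset hy.1 inter_subset_right
  obtain ⟨B, hBW, hcl, hB⟩ :=
    exists_subset_closure_union_eq (insert_subset hyE₀ (inter_subset_left.trans h.subset_ground))
      (F \ F₁)
  have hKB : K ∪ B ⊆ insert y F :=
    union_subset (insert_subset_insert inter_subset_left)
      ((hBW.trans sdiff_subset).trans (subset_insert _ _))
  refine ⟨K ∪ B, ⟨hKB.trans (insert_subset hyE₀ h.subset_ground), ?_, ?_, ?_⟩, ?_⟩
  · refine h.subset_closure.trans (hcl ▸ M₀.closure_subset_closure ?_)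
    exact (inter_union_sdiff F F₁).symm.subset.trans (union_subset_union_left _ (subset_insert _ _))
  · exact (sdiff_subset_iff.2 (union_subset_union_left B hKF₁)).trans hB
  · refine fun x hx ↦ inter_coloops_restrict_subset hKB
      ⟨hx.1, insert_coloops_restrict_subset hFE₁ hy.2 hyF ?_⟩
    rcases hKB hx.1 with rfl | hxF
    · exact mem_insert _ _
    · exact mem_insert_of_mem _ (h.sdiff_subset_coloops₁ ⟨hxF, hx.2⟩)
  · rw [ssubset_iff_of_subset
      (subset_inter ((subset_insert _ _).trans subset_union_left) inter_subset_right)]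
    exact ⟨y, ⟨Or.inl (mem_insert _ _), hy.1⟩, fun hyF₁ ↦ hyF' hyF₁.1⟩

lemma exists_spansWithColoops_subset_closure [M₀.Finite] (hE : M₁.E = M₀.E)
    (hF₀ : F₀ ⊆ M₀.E) (hF₁ : F₁ ⊆ M₁.E) :
    ∃ F, SpansWithColoops M₀ M₁ F₀ F₁ F ∧ F₁ ⊆ M₁.closure F := by
  have hfin : {F | SpansWithColoops M₀ M₁ F₀ F₁ F}.Finite :=
    M₀.ground_finite.finite_subsets.subset fun F hF ↦ hF.subset_ground
  obtain ⟨F, hF, hmax⟩ := hfin.exists_maximalFor (· ∩ F₁) _ (exists_spansWithColoops hF₀)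
  refine ⟨F, hF, fun y hy ↦ by_contra fun hyF ↦ ?_⟩
  obtain ⟨F', hF', hlt⟩ := hF.exists_inter_ssubset hE ⟨hy, hF₁ hy⟩ hyF
  exact hlt.not_subset (hmax hF' hlt.subset)

end Matroid

theorem cantor_bernstein_sets_general {α : Type*} (M₀ M₁ : Matroid α) [M₀.Finite]
    {E : Set α} (hE₀ : M₀.E = E) (hE₁ : M₁.E = E)
    (F₀ F₁ : Set α) (hF₀ : F₀ ⊆ E) (hF₁ : F₁ ⊆ E) :
    ∃ F ⊆ E, F₀ ⊆ M₀.closure F ∧ F₁ ⊆ M₁.closure F ∧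
      E \ F₁ ⊆ M₀✶.closure (E \ F) ∧ E \ F₀ ⊆ M₁✶.closure (E \ F) := by
  subst hE₀
  obtain ⟨F, hF, hF₁F⟩ := Matroid.exists_spansWithColoops_subset_closure hE₁ hF₀ (hE₁ ▸ hF₁)
  refine ⟨F, hF.subset_ground, hF.subset_closure, hF₁F,
    Matroid.sdiff_subset_dual_closure_compl hF.subset_ground hF.sdiff_subset_coloops₀, ?_⟩
  rw [← hE₁]
  exact Matroid.sdiff_subset_dual_closure_compl (hE₁ ▸ hF.subset_ground) hF.sdiff_subset_coloops₁

/-- **Cantor–Bernstein for arbitrary edge sets (finite case).** For finite matroids `M₀, M₁`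
on `E` and `F₀, F₁ ⊆ E`, there is `F ⊆ E` with `Fᵢ ⊆ span_{Mᵢ}(F)` and
`E \ F_{1−i} ⊆ span_{Mᵢ*}(E \ F)` for `i ∈ {0,1}`. -/
theorem cantor_bernstein_sets {α : Type*} (M₀ M₁ : Matroid α) [M₀.Finite] [M₁.Finite]
    {E : Set α} (hE₀ : M₀.E = E) (hE₁ : M₁.E = E)
    (F₀ F₁ : Set α) (hF₀ : F₀ ⊆ E) (hF₁ : F₁ ⊆ E) :
    ∃ F ⊆ E, F₀ ⊆ M₀.closure F ∧ F₁ ⊆ M₁.closure F ∧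
      E \ F₁ ⊆ M₀✶.closure (E \ F) ∧ E \ F₀ ⊆ M₁✶.closure (E \ F) :=
  cantor_bernstein_sets_general M₀ M₁ hE₀ hE₁ F₀ F₁ hF₀ hF₁
end

section
/- Let M be a cofinitary matroid (the dual M* is finitary) on ground set E, let α be a limit ordinal, and let ⟨E_β : β < α⟩ be a sequence of subsets of E with limit E_α. If g ∈ span_M(E_β) for every β < α, then g ∈ span_M(E_α). -/
/-!
If `g ∉ cl(E_α)`, pick a base `B ∋ g` extending a basis of `E_α`; the complement of
`cl(B \ {g})` is a cocircuit `K` through `g` missing `E_α`, and `K` is finite because `M✶` is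
finitary. Each element of `K` lies outside the limit, so it is absent from `E_β` for all large
`β < α`; as `K` is finite and `α` is a limit, a single `β < α` has `E_β` disjoint from `K`.
A set disjoint from a cocircuit spans nothing in it (a circuit never meets a cocircuit in
exactly one element), so `g ∉ cl(E_β)`.
-/

open Set Order

namespace Matroid

variable {α : Type*} {M : Matroid α} {e : α} {X K : Set α}

lemma IsCocircuit.disjoint_closure (hK : M.IsCocircuit K) (hKX : Disjoint K X) :
    Disjoint K (M.closure X) := by
  refine disjoint_left.2 fun x hxK hxcl ↦ ?_
  obtain ⟨C, hCX, hC, hxC⟩ :=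
    exists_isCircuit_of_mem_closure hxcl (hKX.notMem_of_mem_left hxK)
  refine hC.inter_isCocircuit_ne_singleton hK (e := x) ?_
  refine (subset_singleton_iff.2 fun y hy ↦ ?_).antisymm (singleton_subset_iff.2 ⟨hxC, hxK⟩)
  exact (hCX hy.1).resolve_right (hKX.notMem_of_mem_left hy.2)

lemma exists_isCocircuit_of_notMem_closure (he : e ∈ M.E) (heX : e ∉ M.closure X) :
    ∃ K, M.IsCocircuit K ∧ e ∈ K ∧ Disjoint K X := by
  obtain ⟨I, hI⟩ := M.exists_isBasis' X
  rw [← hI.closure_eq_closure] at heX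
  obtain ⟨B, hB, hIB⟩ :=
    (hI.indep.insert_indep_iff.2 (Or.inl ⟨he, heX⟩)).exists_isBase_superset
  have heB : e ∈ B := hIB (mem_insert _ _)
  have hIBe : I ⊆ B \ {e} :=
    subset_sdiff_singleton ((subset_insert _ _).trans hIB)
      fun heI ↦ heX (M.mem_closure_of_mem' heI)
  refine ⟨_, hB.compl_closure_sdiff_singleton_isCocircuit heB,
    ⟨he, hB.indep.notMem_closure_sdiff_of_mem heB⟩, disjoint_left.2 fun x hx hxX ↦ hx.2 ?_⟩
  have hxI : x ∈ M.closure I := hI.closure_eq_closure ▸ M.mem_closure_of_mem' hxX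
  exact M.closure_subset_closure hIBe hxI

end Matroid

lemma Order.IsSuccLimit.exists_forall_of_finite {ι β : Type*} [LinearOrder ι]
    [OrderBot ι] {o : ι} (ho : IsSuccLimit o) {s : Set β} (hs : s.Finite) {P : β → ι → Prop}
    (h : ∀ c ∈ s, ∃ γ < o, ∀ δ ∈ Ioo γ o, P c δ) : ∃ δ < o, ∀ c ∈ s, P c δ := by
  choose! f hfo hf using h
  have hsup : hs.toFinset.sup f < o :=
    Finset.sup_lt_iff ho.bot_lt |>.2 fun c hc ↦ hfo c (hs.mem_toFinset.1 hc)
  obtain ⟨δ, hδo, hsupδ⟩ := ho.lt_iff_exists_lt.1 hsup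
  refine ⟨δ, hδo, fun c hc ↦ hf c hc δ ⟨?_, hδo⟩⟩
  exact (Finset.le_sup (hs.mem_toFinset.2 hc)).trans_lt hsupδ

theorem span_of_limit_general {α : Type*} (M : Matroid α) [M✶.Finitary]
    (o : Ordinal) (ho : Order.IsSuccLimit o) (Eseq : Ordinal → Set α) (Elim : Set α)
    (hlim₂ : (⋂ γ ∈ Set.Iio o, ⋃ β ∈ Set.Ioo γ o, Eseq β) = Elim)
    (g : α) (hg : ∀ β < o, g ∈ M.closure (Eseq β)) :
    g ∈ M.closure Elim := by
  by_contra hgcl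
  have hgE : g ∈ M.E := M.closure_subset_ground _ (hg 0 ho.pos)
  obtain ⟨K, hK, hgK, hKElim⟩ := Matroid.exists_isCocircuit_of_notMem_closure hgE hgcl
  have heventually : ∀ c ∈ K, ∃ γ < o, ∀ β ∈ Ioo γ o, c ∉ Eseq β := by
    intro c hc
    have hc' : c ∉ ⋂ γ ∈ Iio o, ⋃ β ∈ Ioo γ o, Eseq β :=
      hlim₂ ▸ hKElim.notMem_of_mem_left hc
    simpa using hc'
  obtain ⟨β, hβo, hβ⟩ := ho.exists_forall_of_finite hK.finite heventually
  exact (hK.disjoint_closure (disjoint_left.2 hβ)).notMem_of_mem_left hgK (hg β hβo)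

/-- **Observation (ii).** For a cofinitary matroid `M`, if `g` is spanned by every member of a
transfinite sequence of sets having a limit, then `g` is spanned by the limit. -/
theorem span_of_limit {α : Type*} (M : Matroid α) [M✶.Finitary]
    (o : Ordinal) (ho : Order.IsSuccLimit o) (Eseq : Ordinal → Set α) (Elim : Set α)
    (hlim₁ : (⋃ γ ∈ Set.Iio o, ⋂ β ∈ Set.Ioo γ o, Eseq β) = Elim)
    (hlim₂ : (⋂ γ ∈ Set.Iio o, ⋃ β ∈ Set.Ioo γ o, Eseq β) = Elim)
    (g : α) (hg : ∀ β < o, g ∈ M.closure (Eseq β)) :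
    g ∈ M.closure Elim :=
  span_of_limit_general M o ho Eseq Elim hlim₂ g hg
end

section
/- Let M₀ and M₁ be finite matroids on ground set E. Then every common independent set I of M₀ and M₁ can be extended to a maximum-size common independent set J (|J| = max over common independent sets) such that I ⊆ span_{M₀}(J) ∩ span_{M₁}(J). -/
/-!
Among the maximum-size common independent sets choose `J` meeting `I` in as many elements as
possible. If some `x ∈ I` were outside `cl₀(J)`, then `J + x` is `M₀`-independent, so by maximality
it is `M₁`-dependent and `x ∈ cl₁(J)`. Extending `(J ∩ I) + x` to an `M₁`-basis `B` of `J + x`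
gives another maximum-size common independent set with `|B ∩ I| > |J ∩ I|`, a contradiction.
The same argument with the matroids swapped gives `I ⊆ cl₁(J)`.
-/

open Set

namespace Matroid

variable {α : Type*} {M M₀ M₁ : Matroid α} {I J : Set α} {x : α}

def IsMaxCommonIndep (M₀ M₁ : Matroid α) (J : Set α) : Prop :=
  M₀.Indep J ∧ M₁.Indep J ∧ ∀ K, M₀.Indep K → M₁.Indep K → K.ncard ≤ J.ncard

theorem isMaxCommonIndep_comm : IsMaxCommonIndep M₀ M₁ J ↔ IsMaxCommonIndep M₁ M₀ J :=
  ⟨fun ⟨h₀, h₁, h⟩ ↦ ⟨h₁, h₀, fun K hK₁ hK₀ ↦ h K hK₀ hK₁⟩,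
    fun ⟨h₁, h₀, h⟩ ↦ ⟨h₀, h₁, fun K hK₀ hK₁ ↦ h K hK₁ hK₀⟩⟩

theorem finite_setOf_commonIndep (M₀ M₁ : Matroid α) [M₀.Finite] :
    {J | M₀.Indep J ∧ M₁.Indep J}.Finite :=
  M₀.ground_finite.finite_subsets.subset fun _ hJ ↦ hJ.1.subset_ground

theorem finite_setOf_isMaxCommonIndep (M₀ M₁ : Matroid α) [M₀.Finite] :
    {J | IsMaxCommonIndep M₀ M₁ J}.Finite :=
  (finite_setOf_commonIndep M₀ M₁).subset fun _ hJ ↦ ⟨hJ.1, hJ.2.1⟩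

theorem exists_isMaxCommonIndep (M₀ M₁ : Matroid α) [M₀.Finite] :
    ∃ J, IsMaxCommonIndep M₀ M₁ J := by
  obtain ⟨J, ⟨hJ₀, hJ₁⟩, hJ⟩ := exists_max_image _ ncard (finite_setOf_commonIndep M₀ M₁)
    ⟨∅, M₀.empty_indep, M₁.empty_indep⟩
  exact ⟨J, hJ₀, hJ₁, fun K hK₀ hK₁ ↦ hJ K ⟨hK₀, hK₁⟩⟩

theorem exists_isMaxCommonIndep_forall_inter_ncard_le (M₀ M₁ : Matroid α) [M₀.Finite]
    (I : Set α) : ∃ J, IsMaxCommonIndep M₀ M₁ J ∧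
      ∀ K, IsMaxCommonIndep M₀ M₁ K → (K ∩ I).ncard ≤ (J ∩ I).ncard :=
  exists_max_image _ (fun J ↦ (J ∩ I).ncard) (finite_setOf_isMaxCommonIndep M₀ M₁)
    (exists_isMaxCommonIndep M₀ M₁)

theorem IsMaxCommonIndep.mem_closure_of_indep_insert (hJ : IsMaxCommonIndep M₀ M₁ J)
    (hJfin : J.Finite) (hxJ : x ∉ J) (hx₀ : M₀.Indep (insert x J)) (hx₁ : x ∈ M₁.E) :
    x ∈ M₁.closure J := by
  by_contra hxcl
  have hle := hJ.2.2 _ hx₀ (hJ.2.1.insert_indep_iff.2 (Or.inl ⟨hx₁, hxcl⟩))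
  rw [ncard_insert_of_notMem hxJ hJfin] at hle
  omega

theorem Indep.exists_indep_subset_insert_encard_eq (hJ : M.Indep J) (hI : M.Indep I)
    (hx : x ∈ I) (hxJ : x ∈ M.closure J) :
    ∃ B, M.Indep B ∧ B ⊆ insert x J ∧ B.encard = J.encard ∧ insert x (J ∩ I) ⊆ B := by
  have hJbasis : M.IsBasis J (insert x J) :=
    hJ.isBasis_of_subset_of_subset_closure (subset_insert _ _)
      (insert_subset hxJ (M.subset_closure J hJ.subset_ground))
  obtain ⟨B, hB, hxB⟩ := (hI.subset (insert_subset hx inter_subset_right)).subset_isBasis_of_subset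
    (insert_subset_insert inter_subset_left) hJbasis.subset_ground
  exact ⟨B, hB.indep, hB.subset, hB.encard_eq_encard hJbasis, hxB⟩

theorem IsMaxCommonIndep.subset_closure_left (hJ : IsMaxCommonIndep M₀ M₁ J) (hJfin : J.Finite)
    (hI₀ : I ⊆ M₀.E) (hI₁ : M₁.Indep I)
    (hJI : ∀ K, IsMaxCommonIndep M₀ M₁ K → (K ∩ I).ncard ≤ (J ∩ I).ncard) :
    I ⊆ M₀.closure J := by
  intro x hx
  by_contra hxcl
  have hxJ : x ∉ J := fun h ↦ hxcl (M₀.subset_closure J hJ.1.subset_ground h)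
  have hx₀ : M₀.Indep (insert x J) := hJ.1.insert_indep_iff.2 (Or.inl ⟨hI₀ hx, hxcl⟩)
  obtain ⟨B, hB₁, hBJ, hBcard, hxB⟩ := hJ.2.1.exists_indep_subset_insert_encard_eq hI₁ hx
    (hJ.mem_closure_of_indep_insert hJfin hxJ hx₀ (hI₁.subset_ground hx))
  have hBncard : B.ncard = J.ncard := by rw [ncard_def, hBcard, ← ncard_def]
  have hBmax : IsMaxCommonIndep M₀ M₁ B :=
    ⟨hx₀.subset hBJ, hB₁, fun K hK₀ hK₁ ↦ hBncard ▸ hJ.2.2 K hK₀ hK₁⟩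
  have hlt : (J ∩ I).ncard < (B ∩ I).ncard := by
    calc (J ∩ I).ncard < (insert x (J ∩ I)).ncard :=
          (ncard_insert_of_notMem (fun h ↦ hxJ h.1) (hJfin.inter_of_left I)).symm ▸ lt_add_one _
      _ ≤ (B ∩ I).ncard := ncard_le_ncard (subset_inter hxB (insert_subset hx inter_subset_right))
          (((hJfin.insert x).subset hBJ).inter_of_left I)
  exact (hJI B hBmax).not_gt hlt

end Matroid

theorem strongly_maximal_cofinal_general {α : Type*} (M₀ M₁ : Matroid α) [M₀.Finite]
    (I : Set α) (hI₀ : M₀.Indep I) (hI₁ : M₁.Indep I) :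
    ∃ J, M₀.Indep J ∧ M₁.Indep J ∧
      (∀ K, M₀.Indep K → M₁.Indep K → K.ncard ≤ J.ncard) ∧
      I ⊆ M₀.closure J ∩ M₁.closure J := by
  obtain ⟨J, hJ, hJI⟩ := Matroid.exists_isMaxCommonIndep_forall_inter_ncard_le M₀ M₁ I
  have hJfin : J.Finite := M₀.ground_finite.subset hJ.1.subset_ground
  refine ⟨J, hJ.1, hJ.2.1, hJ.2.2, subset_inter ?_ ?_⟩
  · exact hJ.subset_closure_left hJfin hI₀.subset_ground hI₁ hJI
  · exact (Matroid.isMaxCommonIndep_comm.1 hJ).subset_closure_left hJfin hI₁.subset_ground hI₀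
      fun K hK ↦ hJI K (Matroid.isMaxCommonIndep_comm.2 hK)

/-- **Cofinality of maximum common independent sets (finite case).** Every common independent
set `I` of two finite matroids lies below some maximum-size common independent set `J` in the
order `I ⊴ J` iff `I ⊆ span_{M₀}(J) ∩ span_{M₁}(J)`. -/
theorem strongly_maximal_cofinal {α : Type*} (M₀ M₁ : Matroid α) [M₀.Finite] [M₁.Finite]
    (hE : M₀.E = M₁.E) (I : Set α) (hI₀ : M₀.Indep I) (hI₁ : M₁.Indep I) :
    ∃ J, M₀.Indep J ∧ M₁.Indep J ∧
      (∀ K, M₀.Indep K → M₁.Indep K → K.ncard ≤ J.ncard) ∧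
      I ⊆ M₀.closure J ∩ M₁.closure J :=
  strongly_maximal_cofinal_general M₀ M₁ I hI₀ hI₁
end

section
/- Let G be a bipartite graph with classes V₀, V₁ and let M₀, M₁ be the induced partition matroids on E(G) (a set of edges is Mᵢ-independent iff no two of its edges share an endpoint in Vᵢ). Then a matching I of G is strongly maximal (i.e., there is a partition E = E₀ ⊔ E₁ with I ∩ Eᵢ spanning Eᵢ in Mᵢ) if and only if one can choose exactly one endpoint of each edge of I such that the chosen vertices form a vertex cover of G. -/
/-- `e` is spanned by the edge set `X` in the partition matroid of the vertex class `A`: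
`e ∈ X` or some edge of `X` shares an endpoint in `A` with `e`. -/
def partitionSpan {V : Type*} (A : Set V) (X : Set (Sym2 V)) (e : Sym2 V) : Prop :=
  e ∈ X ∨ ∃ f ∈ X, ∃ v ∈ A, v ∈ e ∧ v ∈ f

/-- A matching `I` in a bipartite graph `G = (V₀, V₁; E)` is strongly maximal for the two
partition matroids (i.e. `E` partitions as `E₀ ⊔ E₁` with `I ∩ Eᵢ` spanning `Eᵢ` in `Mᵢ`)
iff one can choose one endpoint of each edge of `I` so that the chosen vertices cover `G`. -/
theorem strongly_maximal_iff_vertex_cover {V : Type*} (G : SimpleGraph V) (V₀ V₁ : Set V)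
    (hpart : V₀ ∪ V₁ = Set.univ) (hdisj : Disjoint V₀ V₁)
    (hbip : ∀ ⦃u v⦄, G.Adj u v → (u ∈ V₀ ∧ v ∈ V₁) ∨ (u ∈ V₁ ∧ v ∈ V₀))
    (I : Set (Sym2 V)) (hIE : I ⊆ G.edgeSet)
    (hI : I.Pairwise fun e f => ∀ v, v ∈ e → v ∉ f) :
    (∃ E₀ E₁ : Set (Sym2 V), E₀ ∪ E₁ = G.edgeSet ∧ Disjoint E₀ E₁ ∧
      (∀ e ∈ E₀, partitionSpan V₀ (I ∩ E₀) e) ∧ (∀ e ∈ E₁, partitionSpan V₁ (I ∩ E₁) e)) ↔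
    (∃ c : Sym2 V → V, (∀ e ∈ I, c e ∈ e) ∧ ∀ e ∈ G.edgeSet, ∃ e' ∈ I, c e' ∈ e) := by
  classical
  -- uniqueness of the endpoint in a given class
  have huniq : ∀ (A B : Set V), Disjoint A B →
      (∀ ⦃u v⦄, G.Adj u v → (u ∈ A ∧ v ∈ B) ∨ (u ∈ B ∧ v ∈ A)) →
      ∀ e ∈ G.edgeSet, ∀ v w, v ∈ e → w ∈ e → v ∈ A → w ∈ A → v = w := by
    intro A B hAB hb e he v w hv hw hvA hwA
    have hAB' : ∀ {x}, x ∈ A → x ∉ B := fun h => Set.disjoint_left.mp hAB h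
    induction e using Sym2.inductionOn with
    | hf a b =>
      rw [SimpleGraph.mem_edgeSet] at he
      rw [Sym2.mem_iff] at hv hw
      rcases hb he with ⟨ha', hb'⟩ | ⟨ha', hb'⟩ <;>
        rcases hv with rfl | rfl <;> rcases hw with rfl | rfl <;>
          first
          | rfl
          | exact absurd hb' (hAB' hvA)
          | exact absurd hb' (hAB' hwA)
          | exact absurd ha' (hAB' hvA)
          | exact absurd ha' (hAB' hwA)
  constructor
  · rintro ⟨E₀, E₁, hunion, hdisjE, h₀, h₁⟩
    have hex : ∀ e ∈ I, ∃ v, v ∈ e ∧ ((e ∈ E₀ ∧ v ∈ V₀) ∨ (e ∉ E₀ ∧ v ∈ V₁)) := by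
      intro e he
      have heE : e ∈ G.edgeSet := hIE he
      induction e using Sym2.inductionOn with
      | hf a b =>
        rw [SimpleGraph.mem_edgeSet] at heE
        rcases hbip heE with ⟨ha, hb⟩ | ⟨ha, hb⟩
        · by_cases hE : s(a, b) ∈ E₀
          · exact ⟨a, Sym2.mem_mk_left _ _, Or.inl ⟨hE, ha⟩⟩
          · exact ⟨b, Sym2.mem_mk_right _ _, Or.inr ⟨hE, hb⟩⟩
        · by_cases hE : s(a, b) ∈ E₀
          · exact ⟨b, Sym2.mem_mk_right _ _, Or.inl ⟨hE, hb⟩⟩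
          · exact ⟨a, Sym2.mem_mk_left _ _, Or.inr ⟨hE, ha⟩⟩
    set c : Sym2 V → V := fun e =>
      if h : ∃ v, v ∈ e ∧ ((e ∈ E₀ ∧ v ∈ V₀) ∨ (e ∉ E₀ ∧ v ∈ V₁)) then h.choose
      else (Quot.out e).1 with hc
    have hcspec : ∀ e ∈ I, c e ∈ e ∧ ((e ∈ E₀ ∧ c e ∈ V₀) ∨ (e ∉ E₀ ∧ c e ∈ V₁)) := by
      intro e he
      have h := hex e he
      simp only [hc, dif_pos h]
      exact h.choose_spec
    refine ⟨c, fun e he => (hcspec e he).1, fun e he => ?_⟩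
    have : e ∈ E₀ ∪ E₁ := hunion ▸ he
    rcases this with h | h
    · rcases h₀ e h with hin | ⟨f, hf, v, hvV, hve, hvf⟩
      · exact ⟨e, hin.1, (hcspec e hin.1).1⟩
      · refine ⟨f, hf.1, ?_⟩
        have hcf := hcspec f hf.1
        rcases hcf.2 with ⟨_, hcV⟩ | ⟨hnE, _⟩
        · have : v = c f := huniq V₀ V₁ hdisj hbip f (hIE hf.1) v (c f) hvf hcf.1 hvV hcV
          exact this ▸ hve
        · exact absurd hf.2 hnE
    · rcases h₁ e h with hin | ⟨f, hf, v, hvV, hve, hvf⟩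
      · exact ⟨e, hin.1, (hcspec e hin.1).1⟩
      · refine ⟨f, hf.1, ?_⟩
        have hcf := hcspec f hf.1
        have hfnE₀ : f ∉ E₀ := fun hf0 => Set.disjoint_left.mp hdisjE hf0 hf.2
        rcases hcf.2 with ⟨hE, _⟩ | ⟨_, hcV⟩
        · exact absurd hE hfnE₀
        · have : v = c f := huniq V₁ V₀ hdisj.symm (fun u w h => (hbip h).symm) f
            (hIE hf.1) v (c f) hvf hcf.1 hvV hcV
          exact this ▸ hve
  · rintro ⟨c, hcI, hcov⟩
    refine ⟨{e ∈ G.edgeSet | ∃ e' ∈ I, c e' ∈ e ∧ c e' ∈ V₀},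
      G.edgeSet \ {e ∈ G.edgeSet | ∃ e' ∈ I, c e' ∈ e ∧ c e' ∈ V₀}, ?_, ?_, ?_, ?_⟩
    · ext e; simp only [Set.mem_union, Set.mem_diff, Set.mem_setOf_eq]
      constructor
      · rintro (h | h) <;> [exact h.1; exact h.1]
      · intro h; by_cases h' : ∃ e' ∈ I, c e' ∈ e ∧ c e' ∈ V₀
        · exact Or.inl ⟨h, h'⟩
        · exact Or.inr ⟨h, fun hh => h' hh.2⟩
    · exact Set.disjoint_sdiff_right
    · rintro e ⟨he, e', he'I, hce, hcV⟩
      have he'E₀ : e' ∈ {e ∈ G.edgeSet | ∃ e' ∈ I, c e' ∈ e ∧ c e' ∈ V₀} :=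
        ⟨hIE he'I, e', he'I, hcI e' he'I, hcV⟩
      exact Or.inr ⟨e', ⟨he'I, he'E₀⟩, c e', hcV, hce, hcI e' he'I⟩
    · rintro e ⟨he, hne⟩
      obtain ⟨e', he'I, hce⟩ := hcov e he
      have hcV₁ : c e' ∈ V₁ := by
        have : c e' ∈ V₀ ∪ V₁ := hpart ▸ Set.mem_univ _
        rcases this with h | h
        · exact absurd (⟨he, e', he'I, hce, h⟩ : e ∈ {e ∈ G.edgeSet | ∃ e' ∈ I, c e' ∈ e ∧ c e' ∈ V₀}) hne
        · exact h
      have he'E₁ : e' ∉ {e ∈ G.edgeSet | ∃ e' ∈ I, c e' ∈ e ∧ c e' ∈ V₀} := by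
        rintro ⟨_, e'', he''I, hce'', hcV''⟩
        by_cases hee : e'' = e'
        · subst hee; exact Set.disjoint_left.mp hdisj hcV'' hcV₁
        · exact hI he''I he'I hee (c e'') (hcI e'' he''I) hce''
      exact Or.inr ⟨e', ⟨he'I, ⟨hIE he'I, he'E₁⟩⟩, c e', hcV₁, hce, hcI e' he'I⟩
end

section
/- Let M₀ and M₁ be finite matroids on E. Then there exists a common independent set I ∈ ℐ(M₀) ∩ ℐ(M₁) and a partition E = E₀ ⊔ E₁ such that I ∩ Eᵢ spans Eᵢ in Mᵢ for i ∈ {0,1}. -/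
/-!
Deletion–contraction induction on `E`, carrying a certificate: a common independent set `I` and
`A ⊆ E` with `r₀(A) + r₁(E \ A) ≤ |I|`. If `e` is a loop of `M₀` (resp. `M₁`), a certificate
`(I, A)` for the deletions `Mᵢ ＼ e` works for `Mᵢ` with `insert e A` (resp. `A`). Otherwise take
also a certificate `(J, B)` for the contractions `Mᵢ ／ e`, so that `insert e J` is common
independent; submodularity of `X ↦ r₀(X) + r₁(E \ X)` applied to `A` and `insert e B` shows that
`(I, A ∩ B)` or `(insert e J, insert e (A ∪ B))` is a certificate for `M₀, M₁`.

Since `|I ∩ A| ≤ r₀(A)` and `|I \ A| ≤ r₁(E \ A)`, a certificate forces both to be equalities, so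
`I ∩ A` spans `A` in `M₀` and `I \ A` spans `E \ A` in `M₁`.
-/

open Set

namespace ENat

lemma le_or_le_of_add_le_add_add_one {a b c d : ℕ∞} (hc : c ≠ ⊤) (h : a + b ≤ c + (d + 1)) :
    a ≤ c ∨ b ≤ d := by
  by_contra! hlt
  obtain ⟨hca, hdb⟩ := hlt
  lift c to ℕ using hc
  lift d to ℕ using hdb.ne_top
  have := add_le_add (Order.add_one_le_of_lt hca) (Order.add_one_le_of_lt hdb)
  have := this.trans h
  norm_cast at this
  omega

lemma le_of_add_le_add_of_le {a b c d : ℕ∞} (hbd : b ≤ d) (h : c + d ≤ a + b)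
    (hab : a + b ≠ ⊤) : c ≤ a := by
  have hcd : c + d ≠ ⊤ := ne_top_of_le_ne_top hab h
  lift a to ℕ using (WithTop.add_ne_top.1 hab).1
  lift b to ℕ using (WithTop.add_ne_top.1 hab).2
  lift c to ℕ using (WithTop.add_ne_top.1 hcd).1
  lift d to ℕ using (WithTop.add_ne_top.1 hcd).2
  norm_cast at *
  omega

end ENat

namespace Matroid

variable {α : Type*} {M M₀ M₁ : Matroid α} {e : α} {I X A B S : Set α}

lemma IsLoop.eRk_insert (he : M.IsLoop e) (X : Set α) : M.eRk (insert e X) = M.eRk X := by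
  rw [insert_eq, union_comm, M.eRk_eq_eRk_union_eRk_le_zero X he.eRk_eq.le]

lemma IsNonloop.eRk_contractElem_add_one (he : M.IsNonloop e) (X : Set α) :
    (M ／ {e}).eRk X + 1 = M.eRk (insert e X) := by
  obtain ⟨J, hJ⟩ := (M ／ {e}).exists_isBasis' X
  have hJe := he.indep.union_isBasis_union_of_contract_isBasis hJ.isBasis_inter_ground
  have heJ : e ∉ J := fun h => (hJ.indep.subset_ground h).2 rfl
  have hground : X ∩ (M ／ {e}).E ∪ {e} = insert e X ∩ M.E := by
    have := he.mem_ground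
    ext x
    simp only [contract_ground, mem_union, mem_inter_iff, mem_sdiff, mem_singleton_iff,
      mem_insert_iff]
    grind
  rw [hJ.eRk_eq_encard, ← encard_insert_of_notMem heJ, ← M.eRk_inter_ground, ← hground,
    hJe.eRk_eq_encard, union_singleton]

lemma eRk_add_eRk_diff_uncross (M₀ M₁ : Matroid α) (heA : e ∉ A) (heB : e ∉ B) :
    (M₀.eRk (A ∩ B) + M₁.eRk (M₁.E \ (A ∩ B))) +
        (M₀.eRk (insert e (A ∪ B)) + M₁.eRk (M₁.E \ insert e (A ∪ B))) ≤
      (M₀.eRk A + M₁.eRk (M₁.E \ insert e A)) + (M₀.eRk (insert e B) + M₁.eRk (M₁.E \ B)) := by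
  have h₀ := M₀.eRk_inter_add_eRk_union_le A (insert e B)
  have h₁ := M₁.eRk_compl_union_add_eRk_compl_inter_le (insert e A) B
  rw [inter_insert_of_notMem heA, union_insert] at h₀
  rw [insert_inter_of_notMem heB, insert_union] at h₁
  calc _ = (M₀.eRk (A ∩ B) + M₀.eRk (insert e (A ∪ B))) +
        (M₁.eRk (M₁.E \ insert e (A ∪ B)) + M₁.eRk (M₁.E \ (A ∩ B))) := by ring
    _ ≤ (M₀.eRk A + M₀.eRk (insert e B)) + (M₁.eRk (M₁.E \ insert e A) + M₁.eRk (M₁.E \ B)) :=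
      add_le_add h₀ h₁
    _ = _ := by ring

/-- Every common independent set has size at most `r₀(A) + r₁(E \ A)`, so such an `A` certifies
that `I` is a maximum common independent set. -/
def HasIntersectionCertificate (M₀ M₁ : Matroid α) : Prop :=
  ∃ I, M₀.Indep I ∧ M₁.Indep I ∧ ∃ A ⊆ M₀.E, M₀.eRk A + M₁.eRk (M₁.E \ A) ≤ I.encard

lemma HasIntersectionCertificate.exists_of_restrict
    (h : HasIntersectionCertificate (M₀ ↾ S) (M₁ ↾ S)) :
    ∃ I, M₀.Indep I ∧ M₁.Indep I ∧ ∃ A ⊆ S, M₀.eRk A + M₁.eRk (S \ A) ≤ I.encard := by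
  obtain ⟨I, hI₀, hI₁, A, hAS, hA⟩ := h
  rw [restrict_ground_eq] at hAS hA
  rw [restrict_eRk_eq _ hAS, restrict_eRk_eq _ sdiff_subset] at hA
  exact ⟨I, (restrict_indep_iff.1 hI₀).1, (restrict_indep_iff.1 hI₁).1, A, hAS, hA⟩

lemma HasIntersectionCertificate.of_contractElem (he₀ : M₀.IsNonloop e) (he₁ : M₁.IsNonloop e)
    (hI₀ : M₀.Indep I) (hI₁ : M₁.Indep I) (hIfin : I.Finite) (hAE : A ⊆ M₀.E) (hAe : e ∉ A)
    (hA : M₀.eRk A + M₁.eRk (M₁.E \ insert e A) ≤ I.encard)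
    (hcon : HasIntersectionCertificate (M₀ ／ {e}) (M₁ ／ {e})) :
    HasIntersectionCertificate M₀ M₁ := by
  obtain ⟨J, hJ₀, hJ₁, B, hBE, hB⟩ := hcon
  rw [he₀.contractElem_indep_iff] at hJ₀
  rw [he₁.contractElem_indep_iff] at hJ₁
  have hBe : e ∉ B := fun h => (hBE h).2 rfl
  have hB' : M₀.eRk (insert e B) + M₁.eRk (M₁.E \ B) ≤ J.encard + 1 + 1 := by
    have hcompl : M₁.E \ B = insert e ((M₁ ／ {e}).E \ B) := by
      have := he₁.mem_ground
      ext x; simp only [contract_ground, mem_sdiff, mem_insert_iff, mem_singleton_iff]; grind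
    rw [hcompl, ← he₀.eRk_contractElem_add_one, ← he₁.eRk_contractElem_add_one]
    calc _ = (M₀ ／ {e}).eRk B + (M₁ ／ {e}).eRk ((M₁ ／ {e}).E \ B) + 1 + 1 := by ring
      _ ≤ J.encard + 1 + 1 := by gcongr
  have hIJ := (eRk_add_eRk_diff_uncross M₀ M₁ hAe hBe).trans (add_le_add hA hB')
  rw [← encard_insert_of_notMem hJ₀.1] at hIJ
  rcases ENat.le_or_le_of_add_le_add_add_one hIfin.encard_lt_top.ne hIJ with h | h
  · exact ⟨I, hI₀, hI₁, A ∩ B, inter_subset_left.trans hAE, h⟩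
  · exact ⟨insert e J, hJ₀.2, hJ₁.2, insert e (A ∪ B),
      insert_subset he₀.mem_ground (union_subset hAE (hBE.trans sdiff_subset)), h⟩

lemma HasIntersectionCertificate.of_restrict_of_contractElem [M₀.Finite] (hE : M₀.E = M₁.E)
    (he : e ∈ M₀.E) (hdel : HasIntersectionCertificate (M₀ ↾ (M₀.E \ {e})) (M₁ ↾ (M₀.E \ {e})))
    (hcon : HasIntersectionCertificate (M₀ ／ {e}) (M₁ ／ {e})) :
    HasIntersectionCertificate M₀ M₁ := by
  obtain ⟨I, hI₀, hI₁, A, hAE, hA⟩ := hdel.exists_of_restrict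
  have hAe : e ∉ A := fun h => (hAE h).2 rfl
  rw [hE, sdiff_sdiff, singleton_union] at hA
  by_cases hl₀ : M₀.IsLoop e
  · refine ⟨I, hI₀, hI₁, insert e A, insert_subset he (hAE.trans sdiff_subset), ?_⟩
    rwa [hl₀.eRk_insert]
  by_cases hl₁ : M₁.IsLoop e
  · refine ⟨I, hI₀, hI₁, A, hAE.trans sdiff_subset, ?_⟩
    have hcompl : insert e (M₁.E \ insert e A) = M₁.E \ A := by
      have := hE ▸ he
      ext x; grind
    rwa [← hl₁.eRk_insert, hcompl] at hA
  exact .of_contractElem ((not_isLoop_iff he).1 hl₀) ((not_isLoop_iff (hE ▸ he)).1 hl₁) hI₀ hI₁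
    (M₀.ground_finite.subset hI₀.subset_ground) (hAE.trans sdiff_subset) hAe hA hcon

theorem hasIntersectionCertificate_of_ground_eq (hS : S.Finite) (h₀ : M₀.E = S) (h₁ : M₁.E = S) :
    HasIntersectionCertificate M₀ M₁ := by
  induction S, hS using Set.Finite.induction_on generalizing M₀ M₁ with
  | empty => exact ⟨∅, M₀.empty_indep, M₁.empty_indep, ∅, empty_subset _, by simp [h₁]⟩
  | @insert e S heS hS ih =>
    have : M₀.Finite := ⟨h₀ ▸ hS.insert e⟩
    have hdel : M₀.E \ {e} = S := by rw [h₀, insert_sdiff_self_of_notMem heS]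
    refine .of_restrict_of_contractElem (h₀.trans h₁.symm) (h₀ ▸ mem_insert e S)
      (ih hdel hdel) (ih hdel ?_)
    rw [contract_ground, h₁, insert_sdiff_self_of_notMem heS]

lemma eRk_le_encard_inter_of_add_le {E : Set α} (hI₀ : M₀.Indep I) (hI₁ : M₁.Indep I)
    (hIfin : I.Finite) (hIE : I ⊆ E) (hAE : A ⊆ E) (hA : M₀.eRk A + M₁.eRk (E \ A) ≤ I.encard) :
    M₀.eRk A ≤ (I ∩ A).encard ∧ M₁.eRk (E \ A) ≤ (I ∩ (E \ A)).encard := by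
  have hsplit : (I ∩ A).encard + (I ∩ (E \ A)).encard = I.encard := by
    rw [← encard_union_eq (disjoint_sdiff_right.mono inter_subset_right inter_subset_right),
      ← inter_union_distrib_left, union_sdiff_cancel hAE, inter_eq_left.2 hIE]
  have hfin : (I ∩ A).encard + (I ∩ (E \ A)).encard ≠ ⊤ := hsplit ▸ hIfin.encard_lt_top.ne
  have hle₀ := (hI₀.inter_right A).encard_le_eRk_of_subset inter_subset_right
  have hle₁ := (hI₁.inter_right (E \ A)).encard_le_eRk_of_subset inter_subset_right
  rw [← hsplit] at hA
  refine ⟨ENat.le_of_add_le_add_of_le hle₁ hA hfin, ENat.le_of_add_le_add_of_le hle₀ ?_ ?_⟩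
  · rwa [add_comm, add_comm (I ∩ (E \ A)).encard]
  · rwa [add_comm]


lemma Indep.subset_closure_inter_of_eRk_le (hI : M.Indep I) (hIfin : I.Finite) (hX : X ⊆ M.E)
    (h : M.eRk X ≤ (I ∩ X).encard) : X ⊆ M.closure (I ∩ X) :=
  ((hI.inter_right X).isBasis_of_eRk_ge (hIfin.inter_of_left X) inter_subset_right
    (by rwa [(hI.inter_right X).eRk_eq_encard])).subset_closure

end Matroid

theorem matroid_intersection_general {α : Type*} (M₀ M₁ : Matroid α) [M₀.Finite]
    {E : Set α} (hE₀ : M₀.E = E) (hE₁ : M₁.E = E) :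
    ∃ I, M₀.Indep I ∧ M₁.Indep I ∧
      ∃ E₀ E₁ : Set α, E₀ ∪ E₁ = E ∧ Disjoint E₀ E₁ ∧
        E₀ ⊆ M₀.closure (I ∩ E₀) ∧ E₁ ⊆ M₁.closure (I ∩ E₁) := by
  obtain ⟨I, hI₀, hI₁, A, hAE, hA⟩ :=
    Matroid.hasIntersectionCertificate_of_ground_eq (hE₀ ▸ M₀.ground_finite) hE₀ hE₁
  rw [hE₀] at hAE
  rw [hE₁] at hA
  have hIfin : I.Finite := M₀.ground_finite.subset hI₀.subset_ground
  obtain ⟨hA₀, hA₁⟩ := Matroid.eRk_le_encard_inter_of_add_le hI₀ hI₁ hIfin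
    (hE₀ ▸ hI₀.subset_ground) hAE hA
  refine ⟨I, hI₀, hI₁, A, E \ A, union_sdiff_cancel hAE, disjoint_sdiff_right, ?_, ?_⟩
  · exact hI₀.subset_closure_inter_of_eRk_le hIfin (hE₀ ▸ hAE) hA₀
  · exact hI₁.subset_closure_inter_of_eRk_le hIfin (hE₁ ▸ sdiff_subset) hA₁

/-- **Matroid intersection property (finite case).** For finite matroids `M₀, M₁` on `E` there
is a common independent set `I` and a partition `E = E₀ ⊔ E₁` with `I ∩ Eᵢ` spanning `Eᵢ`
in `Mᵢ` for `i ∈ {0,1}`. -/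
theorem matroid_intersection {α : Type*} (M₀ M₁ : Matroid α) [M₀.Finite] [M₁.Finite]
    {E : Set α} (hE₀ : M₀.E = E) (hE₁ : M₁.E = E) :
    ∃ I, M₀.Indep I ∧ M₁.Indep I ∧
      ∃ E₀ E₁ : Set α, E₀ ∪ E₁ = E ∧ Disjoint E₀ E₁ ∧
        E₀ ⊆ M₀.closure (I ∩ E₀) ∧ E₁ ⊆ M₁.closure (I ∩ E₁) :=
  matroid_intersection_general M₀ M₁ hE₀ hE₁
end
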